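/- arXiv:2605.02532 — 7 statements merged into one kernel-verified Lean document; each statement's English description precedes it below -/
import Mathlib

section
/- Let q : ℝ^n → ℝ^n / A_V^T ℝ^d be the quotient map of real vector spaces, let G = ℤ^n / A_V^T ℤ^d, and let T be the torsion subgroup of G. Then: (1) a coset α = a + A_V^T ℤ^d ∈ G is conic if and only if q(a) lies in q([0,1)^n); (2) the set of conic cosets in G is finite, the set q([0,1)^n) ∩ q(ℤ^n) is finite, and the number of conic cosets equals #(q([0,1)^n) ∩ q(ℤ^n)) · #T. (This is the concrete form of the bijection between isomorphism classes of conic divisorial ideals of the toric ring R = k[C^∨(V) ∩ ℤ^d] and (W(B) ∩ Cl(R)_fre) × Cl(R)_tor.) -/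
open Matrix

/-- The real vector obtained from an integer vector by coordinatewise casting. -/
noncomputable def rVec {d : ℕ} (v : Fin d → ℤ) : Fin d → ℝ := fun j => (v j : ℝ)

/-- The cone `C(V)` generated by the vectors `V i` (viewed in `ℝ^d`). -/
def coneOf {d n : ℕ} (V : Fin n → Fin d → ℤ) : Set (Fin d → ℝ) :=
  {x | ∃ a : Fin n → ℝ, (∀ i, 0 ≤ a i) ∧ x = ∑ i, a i • rVec (V i)}

/-- The standing hypotheses on the generators: pairwise distinct, nonzero, primitive,
a minimal generating system of the cone, and the cone is strongly convex. -/
def GoodGens {d n : ℕ} (V : Fin n → Fin d → ℤ) : Prop :=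
  Function.Injective V ∧
  (∀ i, V i ≠ 0) ∧
  (∀ i, Finset.univ.gcd (V i) = 1) ∧
  (∀ i, ¬ ∃ a : Fin n → ℝ, (∀ j, 0 ≤ a j) ∧ a i = 0 ∧
      rVec (V i) = ∑ j, a j • rVec (V j)) ∧
  (∀ x ∈ coneOf V, -x ∈ coneOf V → x = 0)

/-- `A_V^T` as a linear map `ℤ^d → ℤ^n`; the `i`-th coordinate of `A_V^T y` is `⟨v_i, y⟩`. -/
def ATZ {d n : ℕ} (V : Fin n → Fin d → ℤ) : (Fin d → ℤ) →ₗ[ℤ] (Fin n → ℤ) :=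
  Matrix.mulVecLin (Matrix.of fun i j => V i j)

/-- `A_V^T` as a linear map `ℝ^d → ℝ^n`. -/
noncomputable def ATR {d n : ℕ} (V : Fin n → Fin d → ℤ) :
    (Fin d → ℝ) →ₗ[ℝ] (Fin n → ℝ) :=
  Matrix.mulVecLin (Matrix.of fun i j => (V i j : ℝ))

/-- A coset of `ℤ^n / A_V^T ℤ^d` is conic if it has a representative of the form
`⌈A_V^T y⌉` for some real `y`. -/
def IsConic {d n : ℕ} (V : Fin n → Fin d → ℤ)
    (α : (Fin n → ℤ) ⧸ LinearMap.range (ATZ V)) : Prop :=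
  ∃ a : Fin n → ℤ, Submodule.Quotient.mk a = α ∧
    ∃ y : Fin d → ℝ, ∀ i, a i = ⌈∑ j, (V i j : ℝ) * y j⌉

/-!
Let `φ : ℤ^n / A_V^T ℤ^d → ℝ^n / A_V^T ℝ^d` be the map induced by `ℤ^n ⊆ ℝ^n`. An integer vector
`b` equals `⌈A_V^T y⌉` exactly when `b - A_V^T y ∈ [0,1)^n`, so the conic cosets are the preimage
under `φ` of `q([0,1)^n)`, equivalently of `q([0,1)^n) ∩ q(ℤ^n)`, a subset of the range of `φ`.
The kernel of `φ` is the torsion subgroup: if `A_V^T y = a` has a real solution it has a rational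
one, and clearing denominators gives `A_V^T z = k a` with `z` integral and `k ≠ 0`. Every fibre of
`φ` over its range is a coset of the kernel, which gives the product formula. Finiteness: replacing
`y` by its fractional part does not change the class of `⌈A_V^T y⌉` and bounds its entries.
-/

theorem Matrix.exists_mulVec_eq_of_map_mulVec_eq {K L ι κ : Type*} [Field K] [Field L]
    [Algebra K L] [Fintype ι] [Fintype κ] [DecidableEq ι] (M : Matrix ι κ K) (b : ι → K)
    (y : κ → L) (h : M.map (algebraMap K L) *ᵥ y = algebraMap K L ∘ b) :
    ∃ x, M *ᵥ x = b := by
  classical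
  by_contra! hb
  obtain ⟨f, hfb, hf⟩ :=
    Submodule.exists_le_ker_of_notMem (p := LinearMap.range M.mulVecLin) (v := b) <| by
      rintro ⟨x, hx⟩; exact hb x hx
  set c := (dotProductEquiv K ι).symm f
  have hfc : ∀ v, f v = c ⬝ᵥ v := fun v => by
    rw [← (dotProductEquiv K ι).apply_symm_apply f]; rfl
  have hcM : c ᵥ* M = 0 := by
    ext j
    exact (by simpa [hfc] using hf ⟨Pi.single j 1, rfl⟩ : c ⬝ᵥ M.col j = 0)
  apply hfb
  apply (algebraMap K L).injective
  rw [hfc, RingHom.map_dotProduct, ← h, dotProduct_mulVec]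
  have : (algebraMap K L ∘ c) ᵥ* M.map (algebraMap K L) = 0 := by
    ext j; rw [← RingHom.map_vecMul, hcM]; simp
  simp [this]

theorem Matrix.exists_mulVec_eq_zsmul_of_real {ι κ : Type*} [Fintype ι] [DecidableEq ι]
    [Fintype κ]
    (M : Matrix ι κ ℤ) (b : ι → ℤ) (y : κ → ℝ)
    (h : M.map (Int.cast : ℤ → ℝ) *ᵥ y = fun i => (b i : ℝ)) :
    ∃ k : ℤ, k ≠ 0 ∧ ∃ z, M *ᵥ z = k • b := by
  obtain ⟨q, hq⟩ := (M.map (Int.cast : ℤ → ℚ)).exists_mulVec_eq_of_map_mulVec_eq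
    (fun i => (b i : ℚ)) y (by ext i; simpa [Matrix.map_map] using congrFun h i)
  obtain ⟨⟨k, hk⟩, hkq⟩ := IsLocalization.exist_integer_multiples_of_finite (nonZeroDivisors ℤ) q
  choose z hz using hkq
  refine ⟨k, nonZeroDivisors.ne_zero hk, z, funext fun i => Int.cast_injective (α := ℚ) ?_⟩
  have hz' : (Int.cast ∘ z : κ → ℚ) = (k : ℚ) • q := funext fun j => by simpa using hz j
  calc (((M *ᵥ z) i : ℤ) : ℚ) = (M.map Int.cast *ᵥ (k : ℚ) • q) i := by
        rw [← hz']; exact RingHom.map_mulVec (Int.castRingHom ℚ) M z i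
    _ = ((k • b) i : ℤ) := by rw [mulVec_smul, hq]; simp

theorem ceil_sum_mul_mem_Icc {ι : Type*} [Fintype ι] (w : ι → ℤ) {y : ι → ℝ}
    (hy : ∀ j, |y j| ≤ 1) : ⌈∑ j, (w j : ℝ) * y j⌉ ∈ Set.Icc (-∑ j, |w j|) (∑ j, |w j|) := by
  have h : |∑ j, (w j : ℝ) * y j| ≤ ((∑ j, |w j| : ℤ) : ℝ) := by
    push_cast
    refine (Finset.abs_sum_le_sum_abs _ _).trans (Finset.sum_le_sum fun j _ => ?_)
    rw [abs_mul]
    exact mul_le_of_le_one_right (abs_nonneg _) (hy j)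
  rw [abs_le] at h
  refine ⟨(Int.cast_le (R := ℝ)).1 ?_, Int.ceil_le.2 h.2⟩
  push_cast at h ⊢
  exact h.1.trans (Int.le_ceil _)

theorem AddMonoidHom.ncard_preimage_of_subset_range {G H : Type*} [AddGroup G] [AddGroup H]
    (f : G →+ H) {S : Set H} (hS : S ⊆ Set.range f) :
    (f ⁻¹' S).ncard = S.ncard * Nat.card f.ker := by
  have hS' : S ⊆ Set.range (QuotientAddGroup.kerLift f) := hS.trans fun _ ⟨g, hg⟩ => ⟨g, hg⟩
  rw [← Set.ncard_preimage_of_injective_subset_range (QuotientAddGroup.kerLift_injective f) hS',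
    mul_comm, ← Nat.card_coe_set_eq, ← Nat.card_coe_set_eq, ← Nat.card_prod, ← Nat.card_congr
      (QuotientAddGroup.preimageMkEquivAddSubgroupProdSet f.ker _)]
  rfl

section

variable {d n : ℕ} (V : Fin n → Fin d → ℤ)

theorem ATR_apply (y : Fin d → ℝ) (i : Fin n) : ATR V y i = ∑ j, (V i j : ℝ) * y j := rfl

theorem ATR_intCast (z : Fin d → ℤ) : ATR V (fun j => (z j : ℝ)) = fun i => (ATZ V z i : ℝ) := by
  ext i
  simp [ATR_apply, ATZ, Matrix.mulVec, dotProduct]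

noncomputable def toRealQuotient :
    (Fin n → ℤ) ⧸ LinearMap.range (ATZ V) →+ (Fin n → ℝ) ⧸ LinearMap.range (ATR V) :=
  ((LinearMap.range (ATZ V)).liftQ
    ((((LinearMap.range (ATR V)).mkQ).restrictScalars ℤ).comp
      ((Int.castAddHom ℝ).compLeft (Fin n)).toIntLinearMap)
    (by
      rintro _ ⟨z, rfl⟩
      exact (Submodule.Quotient.mk_eq_zero _).2 ⟨_, ATR_intCast V z⟩)).toAddMonoidHom

@[simp]
theorem toRealQuotient_mk (a : Fin n → ℤ) :
    toRealQuotient V (Submodule.Quotient.mk a) =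
      (LinearMap.range (ATR V)).mkQ fun i => (a i : ℝ) := rfl

def cubeImage : Set ((Fin n → ℝ) ⧸ LinearMap.range (ATR V)) :=
  (LinearMap.range (ATR V)).mkQ '' {x | ∀ i, x i ∈ Set.Ico (0 : ℝ) 1}

theorem exists_ceil_eq_iff_mem_cubeImage (b : Fin n → ℤ) :
    (∃ y : Fin d → ℝ, ∀ i, b i = ⌈∑ j, (V i j : ℝ) * y j⌉) ↔
      toRealQuotient V (Submodule.Quotient.mk b) ∈ cubeImage V := by
  simp only [← ATR_apply, toRealQuotient_mk, cubeImage, Set.mem_image, Submodule.mkQ_apply,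
    Submodule.Quotient.eq]
  constructor
  · rintro ⟨y, hy⟩
    refine ⟨fun i => b i - ATR V y i, fun i => ?_, -y, ?_⟩
    · have := Int.ceil_eq_iff.1 (hy i).symm
      constructor <;> simp only <;> linarith
    · ext i
      simp
  · rintro ⟨x, hx, y, hy⟩
    refine ⟨-y, fun i => (Int.ceil_eq_iff.2 ?_).symm⟩
    have := congrFun hy i
    have := hx i
    simp only [map_neg, Pi.neg_apply, Pi.sub_apply, Set.mem_Ico] at *
    constructor <;> linarith

theorem isConic_iff_mem_cubeImage (α : (Fin n → ℤ) ⧸ LinearMap.range (ATZ V)) :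
    IsConic V α ↔ toRealQuotient V α ∈ cubeImage V := by
  induction α using Submodule.Quotient.induction_on with | _ a
  constructor
  · rintro ⟨b, hb, hceil⟩
    rw [← hb]
    exact (exists_ceil_eq_iff_mem_cubeImage V b).1 hceil
  · exact fun h => ⟨a, rfl, (exists_ceil_eq_iff_mem_cubeImage V a).2 h⟩

theorem isOfFinAddOrder_mk_iff (a : Fin n → ℤ) :
    IsOfFinAddOrder (Submodule.Quotient.mk a : (Fin n → ℤ) ⧸ LinearMap.range (ATZ V)) ↔
      (fun i => (a i : ℝ)) ∈ LinearMap.range (ATR V) := by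
  constructor
  · intro h
    obtain ⟨k, hk, hka⟩ := isOfFinAddOrder_iff_nsmul_eq_zero.1 h
    rw [← Submodule.Quotient.mk_smul, Submodule.Quotient.mk_eq_zero] at hka
    obtain ⟨z, hz⟩ := hka
    refine ⟨(k : ℝ)⁻¹ • fun j => (z j : ℝ), ?_⟩
    rw [map_smul, ATR_intCast, hz]
    ext i
    simp [hk.ne']
  · rintro ⟨y, hy⟩
    obtain ⟨k, hk, z, hz⟩ := (Matrix.of V).exists_mulVec_eq_zsmul_of_real a y hy
    refine isOfFinAddOrder_iff_zsmul_eq_zero.2 ⟨k, hk, ?_⟩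
    rw [← Submodule.Quotient.mk_smul, Submodule.Quotient.mk_eq_zero]
    exact ⟨z, hz⟩

theorem torsion_eq_ker_toRealQuotient :
    AddCommGroup.torsion ((Fin n → ℤ) ⧸ LinearMap.range (ATZ V)) = (toRealQuotient V).ker := by
  ext α
  induction α using Submodule.Quotient.induction_on with | _ a
  rw [AddCommGroup.mem_torsion, isOfFinAddOrder_mk_iff, AddMonoidHom.mem_ker, toRealQuotient_mk,
    Submodule.mkQ_apply, Submodule.Quotient.mk_eq_zero]

theorem ceil_ATR_sub_ATZ_floor (y : Fin d → ℝ) (i : Fin n) :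
    ⌈ATR V y i⌉ - ATZ V (fun j => ⌊y j⌋) i = ⌈ATR V (fun j => Int.fract (y j)) i⌉ := by
  have : (fun j => Int.fract (y j)) = y - fun j => (⌊y j⌋ : ℝ) := rfl
  rw [this, map_sub, ATR_intCast, Pi.sub_apply, Int.ceil_sub_intCast]

theorem finite_setOf_isConic : {α | IsConic V α}.Finite := by
  refine ((Set.finite_Icc (-fun i => ∑ j, |V i j|) fun i => ∑ j, |V i j|).image
    Submodule.Quotient.mk).subset ?_
  rintro α ⟨b, rfl, y, hb⟩
  refine ⟨b - ATZ V (fun j => ⌊y j⌋), ?_, ?_⟩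
  · have hfract : ∀ j, |Int.fract (y j)| ≤ 1 := fun j =>
      abs_le.2 ⟨by linarith [Int.fract_nonneg (y j)], (Int.fract_lt_one (y j)).le⟩
    have := fun i => ceil_sum_mul_mem_Icc (V i) hfract
    simp only [Set.mem_Icc, Pi.le_def, Pi.neg_apply, Pi.sub_apply, hb,
      ← ATR_apply, ceil_ATR_sub_ATZ_floor] at this ⊢
    exact ⟨fun i => (this i).1, fun i => (this i).2⟩
  · rw [Submodule.Quotient.mk_sub,
      (Submodule.Quotient.mk_eq_zero _).2 (LinearMap.mem_range_self _ _), sub_zero]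

end

theorem conic_classes_via_quotient_general
    (d n : ℕ)
    (V : Fin n → Fin d → ℤ) :
    (∀ a : Fin n → ℤ,
      IsConic V (Submodule.Quotient.mk a) ↔
        (LinearMap.range (ATR V)).mkQ (fun i => (a i : ℝ)) ∈
          (LinearMap.range (ATR V)).mkQ '' {x : Fin n → ℝ | ∀ i, x i ∈ Set.Ico (0:ℝ) 1}) ∧
    {α : (Fin n → ℤ) ⧸ LinearMap.range (ATZ V) | IsConic V α}.Finite ∧
    ((LinearMap.range (ATR V)).mkQ '' {x : Fin n → ℝ | ∀ i, x i ∈ Set.Ico (0:ℝ) 1} ∩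
      Set.range (fun a : Fin n → ℤ =>
        (LinearMap.range (ATR V)).mkQ fun i => (a i : ℝ))).Finite ∧
    {α : (Fin n → ℤ) ⧸ LinearMap.range (ATZ V) | IsConic V α}.ncard =
      ((LinearMap.range (ATR V)).mkQ '' {x : Fin n → ℝ | ∀ i, x i ∈ Set.Ico (0:ℝ) 1} ∩
        Set.range (fun a : Fin n → ℤ =>
          (LinearMap.range (ATR V)).mkQ fun i => (a i : ℝ))).ncard *
      Nat.card (AddCommGroup.torsion ((Fin n → ℤ) ⧸ LinearMap.range (ATZ V))) := by
  have hrange : Set.range (fun a : Fin n → ℤ => (LinearMap.range (ATR V)).mkQ fun i => (a i : ℝ))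
      = Set.range (toRealQuotient V) :=
    (Submodule.Quotient.mk_surjective _).range_comp (toRealQuotient V)
  have hcube : (LinearMap.range (ATR V)).mkQ '' {x | ∀ i, x i ∈ Set.Ico 0 1} = cubeImage V := rfl
  have hconic : {α | IsConic V α} = toRealQuotient V ⁻¹' cubeImage V :=
    Set.ext (isConic_iff_mem_cubeImage V)
  refine ⟨fun a => isConic_iff_mem_cubeImage V _, finite_setOf_isConic V, ?_, ?_⟩ <;>
    rw [hrange, hcube]
  · rw [← Set.image_preimage_eq_inter_range, ← hconic]
    exact (finite_setOf_isConic V).image _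
  · rw [hconic, ← Set.preimage_inter_range, torsion_eq_ker_toRealQuotient]
    exact AddMonoidHom.ncard_preimage_of_subset_range _ Set.inter_subset_right

theorem conic_classes_via_quotient
    (d n : ℕ) (hd : 1 ≤ d) (hn : 1 ≤ n)
    (V : Fin n → Fin d → ℤ) (hV : GoodGens V) :
    (∀ a : Fin n → ℤ,
      IsConic V (Submodule.Quotient.mk a) ↔
        (LinearMap.range (ATR V)).mkQ (fun i => (a i : ℝ)) ∈
          (LinearMap.range (ATR V)).mkQ '' {x : Fin n → ℝ | ∀ i, x i ∈ Set.Ico (0:ℝ) 1}) ∧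
    {α : (Fin n → ℤ) ⧸ LinearMap.range (ATZ V) | IsConic V α}.Finite ∧
    ((LinearMap.range (ATR V)).mkQ '' {x : Fin n → ℝ | ∀ i, x i ∈ Set.Ico (0:ℝ) 1} ∩
      Set.range (fun a : Fin n → ℤ =>
        (LinearMap.range (ATR V)).mkQ fun i => (a i : ℝ))).Finite ∧
    {α : (Fin n → ℤ) ⧸ LinearMap.range (ATZ V) | IsConic V α}.ncard =
      ((LinearMap.range (ATR V)).mkQ '' {x : Fin n → ℝ | ∀ i, x i ∈ Set.Ico (0:ℝ) 1} ∩
        Set.range (fun a : Fin n → ℤ =>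
          (LinearMap.range (ATR V)).mkQ fun i => (a i : ℝ))).ncard *
      Nat.card (AddCommGroup.torsion ((Fin n → ℤ) ⧸ LinearMap.range (ATZ V))) :=
  conic_classes_via_quotient_general d n V
end

section
/- For every x ∈ ℝ^n the following are equivalent: (i) there exists y ∈ ℝ^d such that x − A_V^T y ∈ [0,1)^n; (ii) for every circuit C of the linear matroid M(V), −|a_C^−| < ⟨a_C, x⟩ < |a_C^+| (this condition does not depend on the choice of sign of a_C). Equivalently, the image W(B) of [0,1)^n under the quotient map ℝ^n → ℝ^n / A_V^T ℝ^d is exactly the set cut out by the strict inequalities −|a_C^−| < a_C^*(z) < |a_C^+| over all circuits C of M(V). -/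
open Matrix

/-- `C` is a circuit of the linear matroid `M(V)`: the family `(v_i)_{i ∈ C}` is
`ℝ`-linearly dependent but every proper subfamily is linearly independent. -/
def IsCircuitV {d n : ℕ} (V : Fin n → Fin d → ℤ) (C : Finset (Fin n)) : Prop :=
  (¬ LinearIndependent ℝ fun i : C => rVec (V i)) ∧
  ∀ C' : Finset (Fin n), C' ⊂ C → LinearIndependent ℝ fun i : C' => rVec (V i)

/-!
If `x - A_Vᵀ y = t ∈ [0,1)ⁿ`, then `⟪a, x⟫ = ⟪a, t⟫` for every relation `a` among the `v_i`, and
`⟪a, t⟫ < |a⁺|` as soon as `a` has a positive entry; since the cone is pointed, every nonzero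
relation has entries of both signs.

Conversely, every nonzero real relation is a sum of conformal (sign-compatible) multiples of circuit
vectors, so the circuit inequalities give `⟪a, x⟫ < |a⁺|` for all nonzero relations `a`. By
compactness of the unit sphere of the relation space this improves to `⟪a, x⟫ ≤ c |a⁺|` for some
`c < 1`, and Hahn–Banach separation from the closed convex set `[0,c]ⁿ + A_Vᵀ ℝᵈ` then yields `y`.
-/

open Finset
open scoped Pointwise

variable {ι : Type*}

section Relations

variable [Fintype ι] (R : Type*) {M : Type*} [Ring R] [AddCommGroup M] [Module R M]

def relations (v : ι → M) : Submodule R (ι → R) :=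
  LinearMap.ker (Fintype.linearCombination R v)

variable {R} {v : ι → M} {a : ι → R}

lemma mem_relations : a ∈ relations R v ↔ ∑ i, a i • v i = 0 := Iff.rfl

lemma mem_relations_iff_vecMul {κ : Type*} {N : Matrix ι κ R} :
    a ∈ relations R N ↔ a ᵥ* N = 0 := by
  rw [vecMul_eq_sum]
  rfl

lemma linearIndepOn_iff_relations {C : Finset ι} :
    LinearIndepOn R v (C : Set ι) ↔ ∀ a ∈ relations R v, (∀ i ∉ C, a i = 0) → a = 0 := by
  have sum_eq {a : ι → R} (haC : ∀ i ∉ C, a i = 0) : ∑ i ∈ C, a i • v i = ∑ i, a i • v i :=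
    sum_subset (subset_univ C) fun i _ hi => by rw [haC i hi, zero_smul]
  rw [linearIndepOn_iff'']
  constructor
  · intro h a ha haC
    funext i
    by_cases hi : i ∈ C
    · exact h C a subset_rfl haC (by rwa [sum_eq haC]) i hi
    · exact haC i hi
  · intro h t g htC hgt hg i _
    have hgC : ∀ i ∉ C, g i = 0 := fun i hi => hgt i fun hit => hi (htC hit)
    refine congrFun (h g ?_ hgC) i
    rw [mem_relations, ← sum_eq hgC, ← sum_subset htC fun i _ hit => by rw [hgt i hit, zero_smul]]
    exact hg

lemma ne_zero_of_minimal {C : Finset ι} [DecidableEq ι]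
    (hC : ∀ C' ⊂ C, LinearIndepOn R v (C' : Set ι))
    (ha : a ∈ relations R v) (haC : ∀ i ∉ C, a i = 0) (ha0 : a ≠ 0) {i : ι} (hi : i ∈ C) :
    a i ≠ 0 := by
  intro hai
  refine ha0 (linearIndepOn_iff_relations.1 (hC _ (erase_ssubset hi)) a ha fun j hj => ?_)
  by_cases hji : j = i
  · rwa [hji]
  · exact haC j fun hjC => hj (mem_erase.2 ⟨hji, hjC⟩)

end Relations

lemma eq_smul_of_minimal [Fintype ι] [DecidableEq ι] {K M : Type*} [Field K] [AddCommGroup M]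
    [Module K M] {v : ι → M} {C : Finset ι} (hC : ∀ C' ⊂ C, LinearIndepOn K v (C' : Set ι))
    {c z : ι → K} (hc : c ∈ relations K v) (hz : z ∈ relations K v)
    (hcC : ∀ i ∉ C, c i = 0) (hzC : ∀ i ∉ C, z i = 0) {i₀ : ι} (hci₀ : c i₀ ≠ 0) :
    z = (z i₀ / c i₀) • c := by
  have hi₀ : i₀ ∈ C := by_contra fun h => hci₀ (hcC i₀ h)
  refine sub_eq_zero.1 (linearIndepOn_iff_relations.1 (hC _ (erase_ssubset hi₀)) _
    (sub_mem hz (Submodule.smul_mem _ _ hc)) fun i hi => ?_)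
  by_cases hii₀ : i = i₀
  · subst hii₀
    simp [hci₀]
  · have hiC : i ∉ C := fun h => hi (mem_erase.2 ⟨hii₀, h⟩)
    simp [hcC i hiC, hzC i hiC]

section Conformal

variable {𝕜 : Type*} [Field 𝕜] [LinearOrder 𝕜] [IsStrictOrderedRing 𝕜]

def IsConformal (z a : ι → 𝕜) : Prop := ∀ i, z i ≠ 0 → 0 < z i * a i

variable {a w z : ι → 𝕜}

lemma IsConformal.refl (a : ι → 𝕜) : IsConformal a a := fun _ h => mul_self_pos.2 h

omit [IsStrictOrderedRing 𝕜] in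
lemma IsConformal.ne_zero (h : IsConformal z a) {i : ι} (hi : z i ≠ 0) : a i ≠ 0 :=
  right_ne_zero_of_mul (h i hi).ne'

lemma IsConformal.trans {b : ι → 𝕜} (hzb : IsConformal z b) (hba : IsConformal b a) :
    IsConformal z a := fun i hi => by
  have h1 := hzb i hi
  have h2 := hba i (hzb.ne_zero hi)
  exact pos_of_mul_pos_left (by nlinarith [mul_pos h1 h2]) (sq_nonneg (b i))

lemma IsConformal.smul {s : 𝕜} (hs : 0 < s) (h : IsConformal z a) : IsConformal (s • z) a :=
  fun i hi => by
    simp only [Pi.smul_apply, smul_eq_mul, mul_assoc] at hi ⊢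
    exact mul_pos hs (h i (right_ne_zero_of_mul hi))

lemma IsConformal.mul_nonneg (hz : IsConformal z a) (hw : IsConformal w a) (i : ι) :
    0 ≤ z i * w i := by
  by_cases hzi : z i = 0
  · simp [hzi]
  by_cases hwi : w i = 0
  · simp [hwi]
  nlinarith [mul_pos (hz i hzi) (hw i hwi), sq_nonneg (a i)]

section Finite

variable [Finite ι]

noncomputable def finsupport {R : Type*} [Zero R] (a : ι → R) : Finset ι :=
  (Set.toFinite (Function.support a)).toFinset

lemma mem_finsupport {R : Type*} [Zero R] {a : ι → R} {i : ι} :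
    i ∈ finsupport a ↔ a i ≠ 0 := by
  simp [finsupport]

omit [IsStrictOrderedRing 𝕜] in
lemma IsConformal.card_finsupport_lt (h : IsConformal z a) {i : ι} (hz : z i = 0)
    (ha : a i ≠ 0) : #(finsupport z) < #(finsupport a) := by
  refine card_lt_card (ssubset_iff_of_subset (fun j hj => ?_) |>.2 ⟨i, ?_, ?_⟩)
  · exact mem_finsupport.2 (h.ne_zero (mem_finsupport.1 hj))
  · exact mem_finsupport.2 ha
  · exact fun hi => mem_finsupport.1 hi hz

lemma exists_isConformal_sub_smul (hw : w ≠ 0) (hwa : ∀ i, w i ≠ 0 → a i ≠ 0) :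
    ∃ i₀, w i₀ ≠ 0 ∧ IsConformal (a - (a i₀ / w i₀) • w) a ∧ (a - (a i₀ / w i₀) • w) i₀ = 0 := by
  obtain ⟨j, hj⟩ := Function.ne_iff.1 hw
  obtain ⟨i₀, hi₀, hmin⟩ := exists_min_image (finsupport w) (fun i => |a i| / |w i|)
    ⟨j, mem_finsupport.2 hj⟩
  have hwi₀ := mem_finsupport.1 hi₀
  refine ⟨i₀, hwi₀, fun i hi => ?_, by simp [hwi₀]⟩
  set t := a i₀ / w i₀
  simp only [Pi.sub_apply, Pi.smul_apply, smul_eq_mul] at hi ⊢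
  by_cases hwi : w i = 0
  · simp only [hwi, mul_zero, sub_zero] at hi ⊢
    exact mul_self_pos.2 hi
  have hai := hwa i hwi
  have hti : |t| * |w i| ≤ |a i| := by
    have := hmin i (mem_finsupport.2 hwi)
    rwa [← abs_div, le_div_iff₀ (abs_pos.2 hwi)] at this
  have hle : t * w i * a i ≤ a i * a i := by
    calc t * w i * a i ≤ |t * w i * a i| := le_abs_self _
      _ = |t| * |w i| * |a i| := by rw [abs_mul, abs_mul]
      _ ≤ |a i| * |a i| := by gcongr
      _ = a i * a i := abs_mul_abs_self _
  exact lt_of_le_of_ne (by nlinarith) (mul_ne_zero hi hai).symm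

end Finite

end Conformal

section PosMass

variable [Fintype ι] {𝕜 : Type*} [Field 𝕜] [LinearOrder 𝕜] [IsStrictOrderedRing 𝕜]
  {a c w z : ι → 𝕜}

/-- The paper's `|a⁺|`. -/
def posMass (a : ι → 𝕜) : 𝕜 := ∑ i, max (a i) 0

lemma posMass_nonneg (a : ι → 𝕜) : 0 ≤ posMass a :=
  sum_nonneg fun _ _ => le_max_right _ _

lemma posMass_smul_of_nonneg {t : 𝕜} (ht : 0 ≤ t) (a : ι → 𝕜) :
    posMass (t • a) = t * posMass a := by
  rw [posMass, posMass, mul_sum]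
  refine sum_congr rfl fun i _ => ?_
  rw [Pi.smul_apply, smul_eq_mul, mul_max_of_nonneg _ _ ht, mul_zero]

lemma posMass_add_of_mul_nonneg (h : ∀ i, 0 ≤ z i * w i) :
    posMass (z + w) = posMass z + posMass w := by
  rw [posMass, posMass, posMass, ← sum_add_distrib]
  refine sum_congr rfl fun i _ => ?_
  rcases mul_nonneg_iff.1 (h i) with ⟨hz, hw⟩ | ⟨hz, hw⟩
  · simp [hz, hw, add_nonneg hz hw]
  · simp [hz, hw, add_nonpos hz hw]

lemma dotProduct_lt_posMass_of_mem_Ico {t : ι → 𝕜} (ht : ∀ i, t i ∈ Set.Ico 0 1)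
    (ha : ∃ i, 0 < a i) : a ⬝ᵥ t < posMass a := by
  have hle : ∀ i, a i * t i ≤ max (a i) 0 := fun i => by
    rcases le_or_gt (a i) 0 with hai | hai
    · exact (mul_nonpos_of_nonpos_of_nonneg hai (ht i).1).trans (le_max_right _ _)
    · rw [max_eq_left hai.le]
      exact mul_le_of_le_one_right hai.le (ht i).2.le
  obtain ⟨i₀, hi₀⟩ := ha
  refine sum_lt_sum (fun i _ => hle i) ⟨i₀, mem_univ _, ?_⟩
  rw [max_eq_left hi₀.le]
  exact mul_lt_of_lt_one_right hi₀ (ht i₀).2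

omit [IsStrictOrderedRing 𝕜] in
lemma exists_mem_Icc_dotProduct_eq_mul_posMass {c : 𝕜} (hc : 0 ≤ c) (a : ι → 𝕜) :
    ∃ b ∈ Set.Icc 0 fun _ => c, a ⬝ᵥ b = c * posMass a := by
  refine ⟨fun i => if 0 < a i then c else 0, ⟨fun i => ?_, fun i => ?_⟩, ?_⟩
  · change (0 : 𝕜) ≤ if 0 < a i then c else 0
    split_ifs <;> simp [hc]
  · change (if 0 < a i then c else 0) ≤ c
    split_ifs <;> simp [hc]
  · rw [posMass, mul_sum, dotProduct]
    refine sum_congr rfl fun i _ => ?_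
    split_ifs with hai
    · rw [max_eq_left hai.le, mul_comm]
    · rw [max_eq_right (not_lt.1 hai), mul_zero, mul_zero]

lemma smul_dotProduct_lt_posMass {x : ι → 𝕜} (hneg : -posMass (-c) < c ⬝ᵥ x)
    (hpos : c ⬝ᵥ x < posMass c) {t : 𝕜} (ht : t ≠ 0) : (t • c) ⬝ᵥ x < posMass (t • c) := by
  rcases ht.lt_or_gt with ht | ht
  · rw [show t • c = (-t) • -c by simp, posMass_smul_of_nonneg (by linarith), smul_dotProduct,
      smul_eq_mul, neg_dotProduct]
    nlinarith
  · rw [posMass_smul_of_nonneg ht.le, smul_dotProduct, smul_eq_mul]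
    exact mul_lt_mul_of_pos_left hpos ht

end PosMass

section ConformalDecomposition

variable [Fintype ι] {𝕜 M : Type*} [Field 𝕜] [LinearOrder 𝕜] [IsStrictOrderedRing 𝕜]
  [AddCommGroup M] [Module 𝕜 M] {v : ι → M}

lemma exists_isConformal_minimal {a : ι → 𝕜} (ha : a ∈ relations 𝕜 v) (ha0 : a ≠ 0) :
    ∃ z ∈ relations 𝕜 v, z ≠ 0 ∧ IsConformal z a ∧
      ∀ C ⊂ finsupport z, LinearIndepOn 𝕜 v (C : Set ι) := by
  induction hN : #(finsupport a) using Nat.strong_induction_on generalizing a with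
  | _ N ih =>
  by_cases hmin : ∀ C ⊂ finsupport a, LinearIndepOn 𝕜 v (C : Set ι)
  · exact ⟨a, ha, ha0, .refl a, hmin⟩
  push Not at hmin
  obtain ⟨C, hCa, hCdep⟩ := hmin
  obtain ⟨w, hw, hwC, hw0⟩ : ∃ w ∈ relations 𝕜 v, (∀ i ∉ C, w i = 0) ∧ w ≠ 0 := by
    simpa [linearIndepOn_iff_relations] using hCdep
  have hwa : ∀ i, w i ≠ 0 → a i ≠ 0 := fun i hi =>
    mem_finsupport.1 (hCa.subset (by_contra fun hiC => hi (hwC i hiC)))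
  obtain ⟨i₀, hwi₀, hconf, hzero⟩ := exists_isConformal_sub_smul hw0 hwa
  obtain ⟨j, hja, hjC⟩ := exists_of_ssubset hCa
  have ha'0 : a - (a i₀ / w i₀) • w ≠ 0 := fun h => by
    simpa [hwC j hjC, mem_finsupport.1 hja] using congrFun h j
  obtain ⟨z, hz, hz0, hza', hzmin⟩ := ih _ (hN ▸ hconf.card_finsupport_lt hzero (hwa i₀ hwi₀))
    (sub_mem ha (Submodule.smul_mem _ _ hw)) ha'0 rfl
  exact ⟨z, hz, hz0, hza'.trans hconf, hzmin⟩

/-- Peeling off conformal circuit vectors one at a time: `a = s • z + (a - s • z)` with both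
summands conformal to `a`, on which both sides of the inequality are additive. -/
lemma dotProduct_lt_posMass_of_minimal {x : ι → 𝕜}
    (h : ∀ z ∈ relations 𝕜 v, z ≠ 0 → (∀ C ⊂ finsupport z, LinearIndepOn 𝕜 v (C : Set ι)) →
      z ⬝ᵥ x < posMass z)
    {a : ι → 𝕜} (ha : a ∈ relations 𝕜 v) (ha0 : a ≠ 0) : a ⬝ᵥ x < posMass a := by
  induction hN : #(finsupport a) using Nat.strong_induction_on generalizing a with
  | _ N ih =>
  obtain ⟨z, hz, hz0, hza, hzmin⟩ := exists_isConformal_minimal ha ha0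
  obtain ⟨i₀, hzi₀, hconf, hzero⟩ := exists_isConformal_sub_smul hz0 fun i => hza.ne_zero
  set s := a i₀ / z i₀
  have hs : 0 < s := by
    have := hza i₀ hzi₀
    rcases mul_pos_iff.1 this with ⟨h1, h2⟩ | ⟨h1, h2⟩
    · exact div_pos h2 h1
    · exact div_pos_of_neg_of_neg h2 h1
  have hsz : IsConformal (s • z) a := hza.smul hs
  have hsplit : a = s • z + (a - s • z) := (add_sub_cancel _ _).symm
  have hmass : posMass a = s * posMass z + posMass (a - s • z) := by
    conv_lhs => rw [hsplit]
    rw [posMass_add_of_mul_nonneg (hsz.mul_nonneg hconf), posMass_smul_of_nonneg hs.le]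
  have hdot : a ⬝ᵥ x = s * (z ⬝ᵥ x) + (a - s • z) ⬝ᵥ x := by
    conv_lhs => rw [hsplit]
    rw [add_dotProduct, smul_dotProduct, smul_eq_mul]
  have hrest : (a - s • z) ⬝ᵥ x ≤ posMass (a - s • z) := by
    by_cases hr0 : a - s • z = 0
    · rw [hr0, zero_dotProduct]
      exact posMass_nonneg _
    exact (ih _ (hN ▸ hconf.card_finsupport_lt hzero (hza.ne_zero hzi₀))
      (sub_mem ha (Submodule.smul_mem _ _ hz)) hr0 rfl).le
  have hzx := mul_lt_mul_of_pos_left (h z hz hz0 hzmin) hs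
  linarith

end ConformalDecomposition

section IntegerRelations

variable {m k : Type*} [Fintype m] [DecidableEq m] [Fintype k]

/-- The Gram matrix `N * Nᵀ` is singular over `K`, hence over `ℤ`, and an integer `u` in its left
kernel lies in that of `N` because `(u ᵥ* N) ⬝ᵥ (u ᵥ* N) = (u ᵥ* (N * Nᵀ)) ⬝ᵥ u`. -/
lemma exists_vecMul_eq_zero_of_map_intCast {K : Type*} [Field K] [CharZero K]
    {N : Matrix m k ℤ} (h : ∃ g ≠ 0, g ᵥ* N.map ((↑) : ℤ → K) = 0) :
    ∃ u ≠ 0, u ᵥ* N = 0 := by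
  obtain ⟨g, hg0, hg⟩ := h
  have hdet : (N * Nᵀ).det = 0 := by
    have : ((Int.castRingHom K).mapMatrix (N * Nᵀ)).det = 0 := by
      refine exists_vecMul_eq_zero_iff.1 ⟨g, hg0, ?_⟩
      rw [RingHom.mapMatrix_apply, Matrix.map_mul, ← vecMul_vecMul, Int.coe_castRingHom, hg,
        zero_vecMul]
    rwa [← RingHom.map_det, map_eq_zero_iff _ Int.cast_injective] at this
  obtain ⟨u, hu0, hu⟩ := exists_vecMul_eq_zero_iff.2 hdet
  refine ⟨u, hu0, dotProduct_self_eq_zero.1 ?_⟩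
  rw [← mulVec_transpose, dotProduct_mulVec, mulVec_transpose, vecMul_vecMul, hu,
    zero_dotProduct]

lemma exists_int_relation_of_not_linearIndepOn [Fintype ι] {N : Matrix ι k ℤ}
    {C : Finset ι} (h : ¬ LinearIndepOn ℝ (N.map ((↑) : ℤ → ℝ)) (C : Set ι)) :
    ∃ b ≠ 0, b ᵥ* N = 0 ∧ ∀ i ∉ C, b i = 0 := by
  classical
  obtain ⟨u, hu0, hu⟩ :=
    exists_vecMul_eq_zero_of_map_intCast (K := ℝ) (N := N.submatrix ((↑) : C → ι) id) <| by
      obtain ⟨g, hg, i, hi⟩ := Fintype.not_linearIndependent_iff.1 h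
      exact ⟨g, Function.ne_iff.2 ⟨i, hi⟩, by rw [vecMul_eq_sum]; exact hg⟩
  refine ⟨fun i => if h : i ∈ C then u ⟨i, h⟩ else 0, ?_, ?_, fun i hi => dif_neg hi⟩
  · obtain ⟨i, hi⟩ := Function.ne_iff.1 hu0
    exact Function.ne_iff.2 ⟨i, by simpa using hi⟩
  · rw [vecMul_eq_sum] at hu ⊢
    simp only [dite_smul, zero_smul]
    rw [← sum_attach_eq_sum_dite C fun i => u i • N i, ← univ_eq_attach]
    exact hu

end IntegerRelations

lemma mem_add_submodule_of_forall_exists_le {E : Type*} [NormedAddCommGroup E]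
    [NormedSpace ℝ E] {B : Set E} {W : Submodule ℝ E} (hB : IsCompact B) (hBc : Convex ℝ B)
    (hW : IsClosed (W : Set E)) {x : E}
    (h : ∀ φ : E →L[ℝ] ℝ, (∀ w ∈ W, φ w = 0) → ∃ b ∈ B, φ x ≤ φ b) : x ∈ B + (W : Set E) := by
  by_contra hx
  obtain ⟨φ, β, hφS, hβx⟩ :=
    geometric_hahn_banach_closed_point (hBc.add W.convex) (hW.add_left_of_isCompact hB) hx
  obtain ⟨b₀, hb₀, -⟩ := h 0 fun _ _ => rfl
  have hφW : ∀ w ∈ W, φ w = 0 := fun w hw => by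
    by_contra hφw
    have := hφS _ (Set.add_mem_add hb₀ (W.smul_mem ((β - φ b₀) / φ w) hw))
    rw [map_add, map_smul, smul_eq_mul, div_mul_cancel₀ _ hφw] at this
    linarith
  obtain ⟨b, hb, hxb⟩ := h φ hφW
  linarith [hφS b (by simpa using Set.add_mem_add hb W.zero_mem)]

section Box

variable [Fintype ι] {κ : Type*} [Fintype κ]

lemma exists_sub_mulVec_mem_Icc {N : Matrix ι κ ℝ} {x : ι → ℝ} {c : ℝ} (hc : 0 ≤ c)
    (h : ∀ a ∈ relations ℝ N, a ⬝ᵥ x ≤ c * posMass a) :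
    ∃ y, x - N *ᵥ y ∈ Set.Icc 0 (fun _ => c) := by
  classical
  have hx : x ∈ Set.Icc (0 : ι → ℝ) (fun _ => c) + (LinearMap.range N.mulVecLin : Set (ι → ℝ)) := by
    refine mem_add_submodule_of_forall_exists_le isCompact_Icc (convex_Icc _ _)
      (Submodule.closed_of_finiteDimensional _) fun φ hφ => ?_
    set a : ι → ℝ := fun i => φ (Pi.single i 1)
    have hφa : ∀ z, φ z = a ⬝ᵥ z := fun z => by
      conv_lhs => rw [pi_eq_sum_univ' z]
      simp only [map_sum, map_smul, smul_eq_mul, dotProduct, a, mul_comm]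
    have ha : a ∈ relations ℝ N := by
      rw [mem_relations_iff_vecMul]
      refine dotProduct_eq_zero _ fun y => ?_
      rw [← dotProduct_mulVec, ← hφa]
      exact hφ _ ⟨y, rfl⟩
    obtain ⟨b, hb, hab⟩ := exists_mem_Icc_dotProduct_eq_mul_posMass hc a
    exact ⟨b, hb, by rw [hφa, hφa, hab]; exact h a ha⟩
  obtain ⟨b, hb, w, ⟨y, rfl⟩, hbw⟩ := Set.mem_add.1 hx
  exact ⟨y, by rwa [← hbw, mulVecLin_apply, add_sub_cancel_right]⟩

lemma dotProduct_lt_posMass_of_sub_mulVec_mem_Ico {𝕜 : Type*} [Field 𝕜] [LinearOrder 𝕜]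
    [IsStrictOrderedRing 𝕜] {N : Matrix ι κ 𝕜} {x : ι → 𝕜} {y : κ → 𝕜} {a : ι → 𝕜}
    (hy : ∀ i, (x - N *ᵥ y) i ∈ Set.Ico 0 1) (ha : a ∈ relations 𝕜 N) (hpos : ∃ i, 0 < a i) :
    a ⬝ᵥ x < posMass a := by
  have hax : a ⬝ᵥ x = a ⬝ᵥ (x - N *ᵥ y) := by
    rw [dotProduct_sub, dotProduct_mulVec, mem_relations_iff_vecMul.1 ha, zero_dotProduct,
      sub_zero]
  rw [hax]
  exact dotProduct_lt_posMass_of_mem_Ico hy hpos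

end Box

section Uniform

variable [Fintype ι]

lemma posMass_le_card_mul_norm (a : ι → ℝ) : posMass a ≤ Fintype.card ι * ‖a‖ := by
  calc posMass a ≤ ∑ _ : ι, ‖a‖ :=
        sum_le_sum fun i _ => max_le ((le_abs_self _).trans (norm_le_pi_norm a i)) (norm_nonneg _)
    _ = Fintype.card ι * ‖a‖ := by simp

lemma exists_forall_dotProduct_le_mul_posMass (L : Submodule ℝ (ι → ℝ)) {x : ι → ℝ}
    (h : ∀ a ∈ L, a ≠ 0 → a ⬝ᵥ x < posMass a) :
    ∃ c, 0 ≤ c ∧ c < 1 ∧ ∀ a ∈ L, a ⬝ᵥ x ≤ c * posMass a := by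
  set f : (ι → ℝ) → ℝ := fun a => posMass a - a ⬝ᵥ x
  have hf : Continuous f := by
    simp only [f, posMass, dotProduct]
    fun_prop
  have hf_smul : ∀ {t : ℝ} (a : ι → ℝ), 0 ≤ t → f (t • a) = t * f a := fun a ht => by
    simp only [f, posMass_smul_of_nonneg ht, smul_dotProduct, smul_eq_mul, mul_sub]
  set K := (L : Set (ι → ℝ)) ∩ Metric.sphere 0 1
  have hK : IsCompact K := (isCompact_sphere 0 1).inter_left L.closed_of_finiteDimensional
  have hnormalize : ∀ a ∈ L, a ≠ 0 → ‖a‖⁻¹ • a ∈ K := fun a ha ha0 =>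
    ⟨L.smul_mem _ ha, by simp [norm_smul, ha0]⟩
  rcases K.eq_empty_or_nonempty with hK0 | hKne
  · refine ⟨0, le_rfl, one_pos, fun a ha => ?_⟩
    obtain rfl : a = 0 := by_contra fun ha0 => (hK0 ▸ hnormalize a ha ha0 : _ ∈ (∅ : Set _))
    simp
  obtain ⟨b, hbK, hbmin⟩ := hK.exists_isMinOn hKne hf.continuousOn
  have hb0 : b ≠ 0 := ne_zero_of_mem_unit_sphere (⟨b, hbK.2⟩ : Metric.sphere (0 : ι → ℝ) 1)
  have hfb : 0 < f b := sub_pos.2 (h b hbK.1 hb0)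
  set ε := f b / (Fintype.card ι + 1)
  have hε : 0 < ε := by positivity
  refine ⟨max (1 - ε) 0, le_max_right _ _, max_lt (by linarith) one_pos, fun a ha => ?_⟩
  have hfa : f b * ‖a‖ ≤ f a := by
    rcases eq_or_ne a 0 with rfl | ha0
    · simp [f, posMass]
    have := isMinOn_iff.1 hbmin _ (hnormalize a ha ha0)
    rw [hf_smul a (by positivity)] at this
    calc f b * ‖a‖ ≤ ‖a‖⁻¹ * f a * ‖a‖ := by gcongr
      _ = f a := by field_simp
  have hεa : ε * posMass a ≤ f a := by
    calc ε * posMass a ≤ ε * ((Fintype.card ι + 1) * ‖a‖) := by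
          gcongr
          exact (posMass_le_card_mul_norm a).trans (by gcongr; linarith)
      _ = f b * ‖a‖ := by simp only [ε]; field_simp
      _ ≤ f a := hfa
  have hmass := posMass_nonneg a
  calc a ⬝ᵥ x = posMass a - f a := by simp [f]
    _ ≤ (1 - ε) * posMass a := by linarith
    _ ≤ max (1 - ε) 0 * posMass a := by gcongr; exact le_max_left _ _

end Uniform

section Generators

variable {d n : ℕ} {V : Fin n → Fin d → ℤ}

lemma intCast_mem_relations {a : Fin n → ℤ} (ha : ∀ j, ∑ i, a i * V i j = 0) :
    (fun i => (a i : ℝ)) ∈ relations ℝ (rVec ∘ V) := by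
  rw [mem_relations]
  funext j
  simpa [rVec, Finset.sum_apply] using congrArg ((↑) : ℤ → ℝ) (ha j)

lemma GoodGens.eq_zero_of_nonneg (hV : GoodGens V) {a : Fin n → ℝ}
    (ha : a ∈ relations ℝ (rVec ∘ V)) (hnonneg : ∀ i, 0 ≤ a i) : a = 0 := by
  funext i
  set p : Fin n → ℝ := Pi.single i (a i)
  have hp : Fintype.linearCombination ℝ (rVec ∘ V) p ∈ coneOf V :=
    ⟨p, fun j => by by_cases hj : j = i <;> simp [p, hj, hnonneg], rfl⟩
  have hq : -Fintype.linearCombination ℝ (rVec ∘ V) p ∈ coneOf V := by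
    refine ⟨a - p, fun j => by by_cases hj : j = i <;> simp [p, hj, hnonneg], ?_⟩
    change _ = Fintype.linearCombination ℝ (rVec ∘ V) (a - p)
    rw [map_sub, show Fintype.linearCombination ℝ (rVec ∘ V) a = 0 from ha, zero_sub]
  have hzero := hV.2.2.2.2 _ hp hq
  rw [Fintype.linearCombination_apply_single, smul_eq_zero] at hzero
  refine hzero.resolve_right fun hVi => hV.2.1 i (funext fun j => ?_)
  simpa [rVec] using congrFun hVi j

lemma GoodGens.exists_pos_of_mem_relations (hV : GoodGens V) {a : Fin n → ℝ}
    (ha : a ∈ relations ℝ (rVec ∘ V)) (ha0 : a ≠ 0) : ∃ i, 0 < a i := by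
  by_contra! hpos
  exact ha0 (neg_eq_zero.1 (hV.eq_zero_of_nonneg (neg_mem ha) fun i => neg_nonneg.2 (hpos i)))

lemma GoodGens.bounds_of_sub_mulVec_mem_Ico (hV : GoodGens V) {x : Fin n → ℝ} {y : Fin d → ℝ}
    (hy : ∀ i, (x - (rVec ∘ V : Matrix (Fin n) (Fin d) ℝ) *ᵥ y) i ∈ Set.Ico 0 1)
    {a : Fin n → ℝ} (ha : a ∈ relations ℝ (rVec ∘ V)) (ha0 : a ≠ 0) :
    -posMass (-a) < a ⬝ᵥ x ∧ a ⬝ᵥ x < posMass a := by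
  have hneg := dotProduct_lt_posMass_of_sub_mulVec_mem_Ico hy (neg_mem ha)
    (hV.exists_pos_of_mem_relations (neg_mem ha) (neg_ne_zero.2 ha0))
  rw [neg_dotProduct] at hneg
  exact ⟨by linarith,
    dotProduct_lt_posMass_of_sub_mulVec_mem_Ico hy ha (hV.exists_pos_of_mem_relations ha ha0)⟩

lemma IsCircuitV.exists_primitive {C : Finset (Fin n)} (hC : IsCircuitV V C) :
    ∃ a : Fin n → ℤ, (∀ j, ∑ i, a i * V i j = 0) ∧ univ.gcd a = 1 ∧ ∀ i, a i ≠ 0 ↔ i ∈ C := by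
  obtain ⟨b, hb0, hb, hbC⟩ := exists_int_relation_of_not_linearIndepOn (N := Matrix.of V) hC.1
  obtain ⟨i₁, hi₁⟩ := Function.ne_iff.1 hb0
  obtain ⟨a, hba, ha⟩ := Finset.extract_gcd b ⟨i₁, mem_univ _⟩
  have hg : univ.gcd b ≠ 0 := fun h => hi₁ (gcd_eq_zero_iff.1 h i₁ (mem_univ _))
  have hbC' : ∀ i ∈ C, b i ≠ 0 := fun i hi => by
    have hbR : (fun i => (b i : ℝ)) ≠ 0 := fun h =>
      hb0 (funext fun i => by simpa using congrFun h i)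
    exact_mod_cast ne_zero_of_minimal hC.2 (intCast_mem_relations (congrFun hb))
      (fun j hj => by simp [hbC j hj]) hbR hi
  refine ⟨a, fun j => ?_, ha, fun i => ?_⟩
  · have := congrFun hb j
    simp only [vecMul, dotProduct, of_apply, Pi.zero_apply, hba _ (mem_univ _), mul_assoc,
      ← mul_sum] at this
    exact (mul_eq_zero.1 this).resolve_left hg
  · rw [show a i ≠ 0 ↔ b i ≠ 0 by simp [hba i (mem_univ _), hg]]
    exact ⟨fun h => by_contra fun hi => h (hbC i hi), hbC' i⟩

lemma IsCircuitV.of_minimal {z : Fin n → ℝ} (hz : z ∈ relations ℝ (rVec ∘ V)) (hz0 : z ≠ 0)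
    (hmin : ∀ C ⊂ finsupport z, LinearIndepOn ℝ (rVec ∘ V) (C : Set (Fin n))) :
    IsCircuitV V (finsupport z) :=
  ⟨fun hind => hz0 <| (linearIndepOn_iff_relations (v := rVec ∘ V) (C := finsupport z)).1 hind
    z hz fun i hi => by simpa [mem_finsupport] using hi, hmin⟩

lemma IsCircuitV.dotProduct_lt_posMass {C : Finset (Fin n)} (hC : IsCircuitV V C) {x : Fin n → ℝ}
    (hx : ∀ a : Fin n → ℤ, (∀ j, ∑ i, a i * V i j = 0) → univ.gcd a = 1 →
      (∀ i, a i ≠ 0 ↔ i ∈ C) →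
      -posMass (-fun i => (a i : ℝ)) < (fun i => (a i : ℝ)) ⬝ᵥ x ∧
        (fun i => (a i : ℝ)) ⬝ᵥ x < posMass fun i => (a i : ℝ))
    {z : Fin n → ℝ} (hz : z ∈ relations ℝ (rVec ∘ V)) (hzC : ∀ i ∉ C, z i = 0) (hz0 : z ≠ 0) :
    z ⬝ᵥ x < posMass z := by
  obtain ⟨a, ha, hgcd, haC⟩ := hC.exists_primitive
  obtain ⟨hlow, hup⟩ := hx a ha hgcd haC
  obtain ⟨i₀, hi₀⟩ := Function.ne_iff.1 hz0
  have hai₀ : (a i₀ : ℝ) ≠ 0 :=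
    Int.cast_ne_zero.2 ((haC i₀).2 (by_contra fun h => hi₀ (hzC i₀ h)))
  rw [eq_smul_of_minimal hC.2 (intCast_mem_relations ha) hz
    (fun i hi => by simpa using mt (haC i).1 hi) hzC hai₀]
  exact smul_dotProduct_lt_posMass hlow hup (div_ne_zero hi₀ hai₀)

end Generators

theorem conic_region_open_description_general
    (d n : ℕ)
    (V : Fin n → Fin d → ℤ) (hV : GoodGens V) (x : Fin n → ℝ) :
    (∃ y : Fin d → ℝ, ∀ i, x i - ∑ j, (V i j : ℝ) * y j ∈ Set.Ico (0:ℝ) 1) ↔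
    (∀ C : Finset (Fin n), IsCircuitV V C →
      ∀ a : Fin n → ℤ,
        (∀ j, ∑ i, a i * V i j = 0) →
        Finset.univ.gcd a = 1 →
        (∀ i, a i ≠ 0 ↔ i ∈ C) →
        (-(∑ i, max (-(a i : ℝ)) 0) < ∑ i, (a i : ℝ) * x i ∧
          ∑ i, (a i : ℝ) * x i < ∑ i, max ((a i : ℝ)) 0)) := by
  constructor
  · rintro ⟨y, hy⟩ C - a ha hgcd -
    refine hV.bounds_of_sub_mulVec_mem_Ico hy (intCast_mem_relations ha) fun h => ?_
    obtain rfl : a = 0 := funext fun i => by simpa using congrFun h i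
    exact zero_ne_one ((gcd_eq_zero_iff.2 fun _ _ => rfl).symm.trans hgcd)
  · intro H
    have hcircuit : ∀ z ∈ relations ℝ (rVec ∘ V), z ≠ 0 →
        (∀ C ⊂ finsupport z, LinearIndepOn ℝ (rVec ∘ V) (C : Set (Fin n))) →
        z ⬝ᵥ x < posMass z := fun z hz hz0 hmin =>
      have hC := IsCircuitV.of_minimal hz hz0 hmin
      hC.dotProduct_lt_posMass (H _ hC) hz (fun i hi => by simpa [mem_finsupport] using hi) hz0
    obtain ⟨c, hc0, hc1, hc⟩ := exists_forall_dotProduct_le_mul_posMass _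
      fun a ha ha0 => dotProduct_lt_posMass_of_minimal hcircuit ha ha0
    obtain ⟨y, hy⟩ := exists_sub_mulVec_mem_Icc (N := (rVec ∘ V : Matrix _ _ ℝ)) hc0 hc
    exact ⟨y, fun i => ⟨hy.1 i, (hy.2 i).trans_lt hc1⟩⟩

theorem conic_region_open_description
    (d n : ℕ) (hd : 1 ≤ d) (hn : 1 ≤ n)
    (V : Fin n → Fin d → ℤ) (hV : GoodGens V) (x : Fin n → ℝ) :
    (∃ y : Fin d → ℝ, ∀ i, x i - ∑ j, (V i j : ℝ) * y j ∈ Set.Ico (0:ℝ) 1) ↔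
    (∀ C : Finset (Fin n), IsCircuitV V C →
      ∀ a : Fin n → ℤ,
        (∀ j, ∑ i, a i * V i j = 0) →
        Finset.univ.gcd a = 1 →
        (∀ i, a i ≠ 0 ↔ i ∈ C) →
        (-(∑ i, max (-(a i : ℝ)) 0) < ∑ i, (a i : ℝ) * x i ∧
          ∑ i, (a i : ℝ) * x i < ∑ i, max ((a i : ℝ)) 0)) :=
  conic_region_open_description_general d n V hV x
end

section
/- For every x ∈ ℝ^n the following are equivalent: (i) there exists y ∈ ℝ^d such that x − A_V^T y ∈ [0,1]^n; (ii) for every circuit C of the linear matroid M(V), −|a_C^−| ≤ ⟨a_C, x⟩ ≤ |a_C^+|. Equivalently, the zonotope Z(B), i.e. the image of [0,1]^n under the quotient map ℝ^n → ℝ^n / A_V^T ℝ^d, equals the intersection of the closed slabs −|a_C^−| ≤ a_C^*(z) ≤ |a_C^+| over all circuits C of M(V). -/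
/-!
The set of `x` with `x - A_Vᵀ y ∈ [0,1]ⁿ` for some `y` is the closed convex set `[0,1]ⁿ + im A_Vᵀ`,
so by Hahn–Banach it is cut out by the inequalities `⟪c, x⟫ ≤ ∑ i, max (c i) 0` for `c ∈ ker A_V`,
the right-hand side being the support function of the cube. Every `c ∈ ker A_V` is a nonnegative
combination of elementary vectors (vectors of minimal support) of `ker A_V` conforming to the sign
pattern of `c`, and the support function is additive on such combinations, so it suffices to test
elementary vectors. These are the real multiples of the primitive circuit vectors `a_C`, which exist
because integer vectors that are linearly dependent over `ℝ` are already dependent over `ℤ`.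
-/

open Matrix

open Function Finset
open scoped Pointwise

section CubeSupport

variable {ι : Type*} [Fintype ι]

/-- Written `|c⁺|` in the paper; it is the support function of the cube `[0,1]^ι`. -/
def cubeSupport (c : ι → ℝ) : ℝ := ∑ i, max (c i) 0

lemma isGreatest_cubeSupport (c : ι → ℝ) :
    IsGreatest ((c ⬝ᵥ ·) '' Set.Icc 0 1) (cubeSupport c) := by
  classical
  refine ⟨⟨fun i => if 0 < c i then 1 else 0, ⟨fun i => ?_, fun i => ?_⟩, ?_⟩, ?_⟩
  · dsimp only [Pi.zero_apply]; split_ifs <;> norm_num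
  · dsimp only [Pi.one_apply]; split_ifs <;> norm_num
  · refine sum_congr rfl fun i _ => ?_
    dsimp only
    split_ifs with h
    · rw [mul_one, max_eq_left h.le]
    · rw [mul_zero, max_eq_right (not_lt.1 h)]
  · rintro _ ⟨z, ⟨hz0, hz1⟩, rfl⟩
    refine sum_le_sum fun i _ => ?_
    calc c i * z i ≤ max (c i) 0 * z i := mul_le_mul_of_nonneg_right (le_max_left _ _) (hz0 i)
      _ ≤ max (c i) 0 := mul_le_of_le_one_right (le_max_right _ _) (hz1 i)

lemma cubeSupport_smul {t : ℝ} (ht : 0 ≤ t) (c : ι → ℝ) :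
    cubeSupport (t • c) = t * cubeSupport c := by
  simp only [cubeSupport, mul_sum, Pi.smul_apply, smul_eq_mul, mul_max_of_nonneg _ _ ht,
    mul_zero]

lemma cubeSupport_add {c c' : ι → ℝ} (h : ∀ i, 0 ≤ c i * c' i) :
    cubeSupport (c + c') = cubeSupport c + cubeSupport c' := by
  rw [cubeSupport, cubeSupport, cubeSupport, ← sum_add_distrib]
  refine sum_congr rfl fun i _ => ?_
  rcases mul_nonneg_iff.1 (h i) with ⟨hp, hq⟩ | ⟨hp, hq⟩
  · simp only [Pi.add_apply, max_eq_left hp, max_eq_left hq, max_eq_left (add_nonneg hp hq)]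
  · simp only [Pi.add_apply, max_eq_right hp, max_eq_right hq, max_eq_right (add_nonpos hp hq),
      add_zero]

lemma dotProduct_smul_le_cubeSupport {c x : ι → ℝ} (hup : c ⬝ᵥ x ≤ cubeSupport c)
    (hlow : -cubeSupport (-c) ≤ c ⬝ᵥ x) (μ : ℝ) : (μ • c) ⬝ᵥ x ≤ cubeSupport (μ • c) := by
  rcases le_total 0 μ with hμ | hμ
  · rw [smul_dotProduct, smul_eq_mul, cubeSupport_smul hμ]
    exact mul_le_mul_of_nonneg_left hup hμ
  · rw [← neg_smul_neg, smul_dotProduct, smul_eq_mul, cubeSupport_smul (neg_nonneg.2 hμ),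
      neg_dotProduct]
    exact mul_le_mul_of_nonneg_left (by linarith) (neg_nonneg.2 hμ)

end CubeSupport

section Separation

variable {ι κ : Type*} [Fintype ι] [Fintype κ]

lemma dotProduct_le_cubeSupport_of_sub_mulVec_mem {A : Matrix ι κ ℝ} {x : ι → ℝ} {y : κ → ℝ}
    (hy : x - A *ᵥ y ∈ Set.Icc 0 1) {c : ι → ℝ} (hc : c ᵥ* A = 0) :
    c ⬝ᵥ x ≤ cubeSupport c := by
  have hcx : c ⬝ᵥ x = c ⬝ᵥ (x - A *ᵥ y) := by
    rw [dotProduct_sub, dotProduct_mulVec, hc, zero_dotProduct, sub_zero]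
  exact hcx ▸ (isGreatest_cubeSupport c).2 ⟨_, hy, rfl⟩

lemma eq_zero_of_forall_mul_lt {r u : ℝ} (h : ∀ t : ℝ, t * r < u) : r = 0 := by
  by_contra hr
  have := h ((u + 1) / r)
  rw [div_mul_cancel₀ _ hr] at this
  linarith

lemma exists_cubeSupport_lt_of_forall_sub_mulVec_notMem (A : Matrix ι κ ℝ) {x : ι → ℝ}
    (hx : ∀ y, x - A *ᵥ y ∉ Set.Icc 0 1) : ∃ c, c ᵥ* A = 0 ∧ cubeSupport c < c ⬝ᵥ x := by
  classical
  set S := Set.Icc (0 : ι → ℝ) 1 + (LinearMap.range A.mulVecLin : Set (ι → ℝ))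
  have hxS : x ∉ S := by
    rintro ⟨z, hz, _, ⟨y, rfl⟩, hzx⟩
    apply hx y
    rwa [← hzx, mulVecLin_apply, add_sub_cancel_right]
  obtain ⟨f, u, hfS, hfx⟩ := geometric_hahn_banach_closed_point
    ((convex_Icc 0 1).add (LinearMap.range _).convex)
    ((Submodule.closed_of_finiteDimensional _).add_left_of_isCompact isCompact_Icc) hxS
  set c := (dotProductEquiv ℝ ι).symm f.toLinearMap
  have hf (z : ι → ℝ) : f z = c ⬝ᵥ z :=
    (LinearMap.congr_fun ((dotProductEquiv ℝ ι).apply_symm_apply f.toLinearMap) z).symm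
  have hcA : c ᵥ* A = 0 := by
    refine dotProduct_self_eq_zero.1 (eq_zero_of_forall_mul_lt (u := u) fun t => ?_)
    have := hfS (0 + A *ᵥ (t • (c ᵥ* A)))
      (Set.add_mem_add ⟨le_rfl, zero_le_one⟩ ⟨_, rfl⟩)
    rwa [zero_add, hf, dotProduct_mulVec, dotProduct_smul, smul_eq_mul] at this
  obtain ⟨z, hz, hcz⟩ := (isGreatest_cubeSupport c).1
  have hzS : z ∈ S := by simpa using Set.add_mem_add hz (zero_mem (LinearMap.range A.mulVecLin))
  refine ⟨c, hcA, ?_⟩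
  have := hfS z hzS
  rw [hf] at this hfx
  linarith

theorem exists_sub_mulVec_mem_Icc_iff (A : Matrix ι κ ℝ) (x : ι → ℝ) :
    (∃ y, x - A *ᵥ y ∈ Set.Icc 0 1) ↔ ∀ c, c ᵥ* A = 0 → c ⬝ᵥ x ≤ cubeSupport c := by
  refine ⟨fun ⟨y, hy⟩ c hc => dotProduct_le_cubeSupport_of_sub_mulVec_mem hy hc, fun h => ?_⟩
  by_contra! hx
  obtain ⟨c, hcA, hlt⟩ := exists_cubeSupport_lt_of_forall_sub_mulVec_notMem A hx
  exact hlt.not_ge (h c hcA)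

end Separation

section ElementaryVectors

variable {ι : Type*}

/-- Conformity in the sense of Rockafellar's theory of elementary vectors. -/
def SignConforms (e c : ι → ℝ) : Prop := ∀ i, e i ≠ 0 → 0 < e i * c i

namespace SignConforms

variable {b c e e' : ι → ℝ}

lemma refl (c : ι → ℝ) : SignConforms c c := fun _ hi => mul_self_pos.2 hi

lemma support_subset (h : SignConforms e c) : support e ⊆ support c :=
  fun i hi => right_ne_zero_of_mul (h i hi).ne'

lemma trans (h₁ : SignConforms e c) (h₂ : SignConforms c b) : SignConforms e b := fun i hi => by
  have hec := h₁ i hi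
  have hcb := h₂ i (right_ne_zero_of_mul hec.ne')
  nlinarith [mul_pos hec hcb, sq_nonneg (c i)]

lemma mul_nonneg (h : SignConforms e c) (h' : SignConforms e' c) (i : ι) : 0 ≤ e i * e' i := by
  by_cases he : e i = 0
  · simp [he]
  by_cases he' : e' i = 0
  · simp [he']
  nlinarith [mul_pos (h i he) (h' i he'), sq_nonneg (c i)]

end SignConforms

def IsElementary (L : Submodule ℝ (ι → ℝ)) (e : ι → ℝ) : Prop :=
  e ∈ L ∧ e ≠ 0 ∧ ∀ f ∈ L, support f ⊂ support e → f = 0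

/-- The ratio test: `t` is the first time at which a coordinate of `u - t • v` vanishes. -/
lemma exists_signConforms_sub_smul [Fintype ι] {u v : ι → ℝ} (hvu : support v ⊆ support u)
    (hpos : ∃ i, 0 < u i * v i) :
    ∃ t : ℝ, 0 < t ∧ SignConforms (u - t • v) u ∧ support (u - t • v) ⊂ support u := by
  classical
  obtain ⟨i₀, hi₀, hmin⟩ := (univ.filter fun i => 0 < u i * v i).exists_min_image
    (fun i => u i / v i) (by simpa [Finset.Nonempty] using hpos)
  have huv₀ : 0 < u i₀ * v i₀ := (mem_filter.1 hi₀).2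
  have hv₀ : v i₀ ≠ 0 := right_ne_zero_of_mul huv₀.ne'
  set t := u i₀ / v i₀
  have ht : 0 < t := by
    have : t * v i₀ ^ 2 = u i₀ * v i₀ := by simp only [t]; field_simp
    exact pos_of_mul_pos_left (this ▸ huv₀) (sq_nonneg _)
  have hw (i : ι) : (u - t • v) i = u i - t * v i := rfl
  have hnonneg (i : ι) : 0 ≤ (u - t • v) i * u i := by
    rw [hw]
    by_cases hi : 0 < u i * v i
    · have hvi : v i ≠ 0 := right_ne_zero_of_mul hi.ne'
      have : (u i - t * v i) * u i = u i * v i * (u i / v i - t) := by field_simp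
      rw [this]
      exact _root_.mul_nonneg hi.le (sub_nonneg.2 (hmin i (mem_filter.2 ⟨mem_univ _, hi⟩)))
    · nlinarith [sq_nonneg (u i)]
  have hsupp : support (u - t • v) ⊆ support u := fun i hi hui => hi <| by
    rw [hw, hui, show v i = 0 from not_not.1 fun hvi => hvu hvi hui, mul_zero, sub_zero]
  have hw₀ : (u - t • v) i₀ = 0 := by rw [hw, div_mul_cancel₀ _ hv₀, sub_self]
  refine ⟨t, ht, fun i hi => (hnonneg i).lt_of_ne' (mul_ne_zero hi (hsupp hi)),
    (Set.ssubset_iff_of_subset hsupp).2 ⟨i₀, left_ne_zero_of_mul huv₀.ne', fun h => h hw₀⟩⟩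

variable {L : Submodule ℝ (ι → ℝ)}

lemma IsElementary.exists_eq_smul {e f : ι → ℝ} (he : IsElementary L e) (hfL : f ∈ L)
    (hf : f ≠ 0) (hfe : support f ⊆ support e) : ∃ μ : ℝ, e = μ • f := by
  obtain ⟨i, hi⟩ := Function.ne_iff.1 hf
  refine ⟨e i / f i, sub_eq_zero.1 (he.2.2 _ (L.sub_mem he.1 (L.smul_mem _ hfL)) ?_)⟩
  refine (Set.ssubset_iff_of_subset fun j hj => ?_).2 ⟨i, hfe hi, fun h => h ?_⟩
  · exact (support_sub e _ hj).elim id fun hj' => hfe (support_const_smul_subset _ f hj')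
  · simp [div_mul_cancel₀ _ hi]

variable [Fintype ι]

lemma exists_isElementary_signConforms {c : ι → ℝ} (hcL : c ∈ L) (hc : c ≠ 0) :
    ∃ e, IsElementary L e ∧ SignConforms e c := by
  obtain ⟨e, ⟨heL, he0, hec⟩, hmin⟩ :=
    (InvImage.wf (fun c : ι → ℝ => support c) wellFounded_lt).has_min
      {e | e ∈ L ∧ e ≠ 0 ∧ SignConforms e c} ⟨c, hcL, hc, .refl c⟩
  refine ⟨e, ⟨heL, he0, fun f hfL hfe => by_contra fun hf0 => ?_⟩, hec⟩
  -- a nonzero `±f` of smaller support would let the ratio test shrink the support of `e`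
  have hdescent (v : ι → ℝ) (hvL : v ∈ L) (hv : support v = support f) (i : ι)
      (hi : 0 < e i * v i) : False := by
    obtain ⟨t, ht, hconf, hsupp⟩ := exists_signConforms_sub_smul (hv ▸ hfe.subset) ⟨i, hi⟩
    obtain ⟨j, hje, hjf⟩ := Set.exists_of_ssubset hfe
    refine hmin (e - t • v) ⟨L.sub_mem heL (L.smul_mem t hvL), fun h => hje ?_, hconf.trans hec⟩
      hsupp
    have hvj : v j = 0 := not_not.1 fun hvj => hjf (hv ▸ hvj)
    simpa [hvj] using congrFun h j
  obtain ⟨i, hi⟩ := Function.ne_iff.1 hf0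
  rcases (mul_ne_zero (hfe.subset hi) hi).lt_or_gt with hneg | hpos
  · exact hdescent (-f) (L.neg_mem hfL) (support_neg f) i (by simpa using neg_pos.2 hneg)
  · exact hdescent f hfL rfl i hpos

lemma forall_dotProduct_le_cubeSupport_of_isElementary {x : ι → ℝ}
    (h : ∀ e, IsElementary L e → e ⬝ᵥ x ≤ cubeSupport e) :
    ∀ c ∈ L, c ⬝ᵥ x ≤ cubeSupport c := by
  intro c
  induction c using (InvImage.wf (fun c : ι → ℝ => support c) wellFounded_lt).induction with
  | _ c ih =>
  intro hcL
  by_cases hc : c = 0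
  · simp [hc, cubeSupport]
  obtain ⟨e, he, hec⟩ := exists_isElementary_signConforms hcL hc
  obtain ⟨i, hi⟩ := Function.ne_iff.1 he.2.1
  obtain ⟨t, ht, hconf, hsupp⟩ :=
    exists_signConforms_sub_smul hec.support_subset ⟨i, mul_comm (e i) (c i) ▸ hec i hi⟩
  have hc' := ih (c - t • e) hsupp (L.sub_mem hcL (L.smul_mem t he.1))
  have hdecomp : c = (c - t • e) + t • e := (sub_add_cancel c _).symm
  have hsame (j : ι) : 0 ≤ (c - t • e) j * (t • e) j := by
    simpa [mul_left_comm] using _root_.mul_nonneg ht.le (hconf.mul_nonneg hec j)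
  calc c ⬝ᵥ x = (c - t • e) ⬝ᵥ x + t * (e ⬝ᵥ x) := by
        rw [← smul_eq_mul, ← smul_dotProduct, ← add_dotProduct, ← hdecomp]
    _ ≤ cubeSupport (c - t • e) + t * cubeSupport e :=
        add_le_add hc' (mul_le_mul_of_nonneg_left (h e he) ht.le)
    _ = cubeSupport c := by
        rw [← cubeSupport_smul ht.le, ← cubeSupport_add hsame, ← hdecomp]

end ElementaryVectors

theorem exists_sub_mulVec_mem_Icc_iff_isElementary {ι κ : Type*} [Fintype ι] [Fintype κ]
    (A : Matrix ι κ ℝ) (x : ι → ℝ) :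
    (∃ y, x - A *ᵥ y ∈ Set.Icc 0 1) ↔
      ∀ e, IsElementary (LinearMap.ker A.vecMulLinear) e → e ⬝ᵥ x ≤ cubeSupport e := by
  rw [exists_sub_mulVec_mem_Icc_iff]
  exact ⟨fun h e he => h e he.1, forall_dotProduct_le_cubeSupport_of_isElementary⟩

section IntegerMatrix

variable {ι κ : Type*} [Fintype ι]

lemma linearIndepOn_iff_forall_vecMul_eq_zero {R : Type*} [CommRing R] (A : Matrix ι κ R)
    (s : Finset ι) :
    LinearIndepOn R (fun i => A i) s ↔ ∀ c : ι → R, c ᵥ* A = 0 → support c ⊆ s → c = 0 := by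
  classical
  rw [linearIndepOn_finset_iff]
  constructor
  · intro h c hc hcs
    have hsum : ∑ i ∈ s, c i • A i = 0 := by
      rw [← hc, vecMul_eq_sum]
      exact sum_subset (subset_univ s) fun i _ his => by
        rw [not_not.1 fun hi => his (hcs hi), zero_smul]
    funext i
    by_cases his : i ∈ s
    · exact h c hsum i his
    · exact not_not.1 fun hi => his (hcs hi)
  · intro h f hf i hi
    have := congrFun (h (fun j => if j ∈ s then f j else 0) ?_ ?_) i
    · simpa [hi] using this
    · simpa [vecMul_eq_sum, ite_smul, sum_ite_mem] using hf
    · intro j hj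
      by_contra hjs
      exact hj (if_neg hjs)

lemma intCast_vecMul_eq_zero {B : Matrix ι κ ℤ} {a : ι → ℤ} (ha : a ᵥ* B = 0) :
    (fun i => (a i : ℝ)) ᵥ* B.map (Int.cast : ℤ → ℝ) = 0 := funext fun j => by
  have := RingHom.map_vecMul (Int.castRingHom ℝ) B a j
  rw [ha, Pi.zero_apply, map_zero] at this
  exact this.symm

lemma IsElementary.exists_primitive_int [Finite κ] {B : Matrix ι κ ℤ} {e : ι → ℝ}
    (he : IsElementary (LinearMap.ker (B.map (Int.cast : ℤ → ℝ)).vecMulLinear) e) :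
    ∃ a : ι → ℤ, a ᵥ* B = 0 ∧ univ.gcd a = 1 ∧ support a = support e ∧
      ∃ μ : ℝ, e = μ • fun i => (a i : ℝ) := by
  classical
  have hs : ((univ.filter fun i => e i ≠ 0 : Finset ι) : Set ι) = support e := by
    ext; simp
  have hdepℝ : ¬ LinearIndepOn ℝ (fun i => B.map (Int.cast : ℤ → ℝ) i)
      (univ.filter fun i => e i ≠ 0) := by
    rw [linearIndepOn_iff_forall_vecMul_eq_zero]
    exact fun h => he.2.1 (h e he.1 hs.ge)
  have hdepℤ : ¬ LinearIndepOn ℤ (fun i => B i) (univ.filter fun i => e i ≠ 0) :=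
    fun h => hdepℝ ((linearIndependent_algebraMap_comp_iff (R := ℤ) (S := ℝ)).2 h)
  rw [linearIndepOn_iff_forall_vecMul_eq_zero] at hdepℤ
  push Not at hdepℤ
  obtain ⟨g, hgB, hgs, hg0⟩ := hdepℤ
  obtain ⟨i₀, -⟩ := Function.ne_iff.1 hg0
  obtain ⟨a, hga, ha⟩ := extract_gcd g (univ_nonempty_iff.2 ⟨i₀⟩)
  have hk : univ.gcd g ≠ 0 := fun h => hg0 (funext fun i => gcd_eq_zero_iff.1 h i (mem_univ i))
  replace hga : g = univ.gcd g • a := funext fun i => hga i (mem_univ i)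
  have haB : a ᵥ* B = 0 := by
    rw [hga, smul_vecMul] at hgB
    exact (smul_eq_zero.1 hgB).resolve_left hk
  have hsa : support a ⊆ support e := by
    rw [← hs, ← support_const_smul_of_ne_zero _ _ hk, ← hga]
    exact hgs
  have hsa' : support (fun i => (a i : ℝ)) = support a := support_comp_eq _ (by simp) a
  have ha0 : (fun i => (a i : ℝ)) ≠ 0 := by
    intro h
    have ha0 : a = 0 := funext fun i => by simpa using congrFun h i
    exact hg0 (by rw [hga, ha0, smul_zero])
  obtain ⟨μ, hμ⟩ := he.exists_eq_smul (intCast_vecMul_eq_zero haB) ha0 (hsa'.trans_subset hsa)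
  refine ⟨a, haB, ha, hsa.antisymm ?_, μ, hμ⟩
  rw [hμ]
  exact (support_const_smul_subset μ _).trans hsa'.le

end IntegerMatrix

lemma IsElementary.isCircuitV {d n : ℕ} {V : Fin n → Fin d → ℤ} {e : Fin n → ℝ}
    (he : IsElementary (LinearMap.ker ((of V).map (Int.cast : ℤ → ℝ)).vecMulLinear) e)
    {C : Finset (Fin n)} (hC : (C : Set (Fin n)) = support e) : IsCircuitV V C := by
  have hindep (C' : Finset (Fin n)) :
      (LinearIndependent ℝ fun i : C' => rVec (V i)) ↔
        ∀ c, c ᵥ* (of V).map (Int.cast : ℤ → ℝ) = 0 → support c ⊆ C' → c = 0 :=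
    linearIndepOn_iff_forall_vecMul_eq_zero ((of V).map (Int.cast : ℤ → ℝ)) C'
  refine ⟨fun h => he.2.1 ?_, fun C' hC' => (hindep C').2 fun c hc hcC' => he.2.2 c hc ?_⟩
  · exact (hindep C).1 h e he.1 hC.ge
  · exact hC ▸ hcC'.trans_ssubset (coe_ssubset.2 hC')

theorem zonotope_closed_description_general
    (d n : ℕ)
    (V : Fin n → Fin d → ℤ) (x : Fin n → ℝ) :
    (∃ y : Fin d → ℝ, ∀ i, x i - ∑ j, (V i j : ℝ) * y j ∈ Set.Icc (0:ℝ) 1) ↔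
    (∀ C : Finset (Fin n), IsCircuitV V C →
      ∀ a : Fin n → ℤ,
        (∀ j, ∑ i, a i * V i j = 0) →
        Finset.univ.gcd a = 1 →
        (∀ i, a i ≠ 0 ↔ i ∈ C) →
        (-(∑ i, max (-(a i : ℝ)) 0) ≤ ∑ i, (a i : ℝ) * x i ∧
          ∑ i, (a i : ℝ) * x i ≤ ∑ i, max ((a i : ℝ)) 0)) := by
  have hcube (y : Fin d → ℝ) : (∀ i, x i - ∑ j, (V i j : ℝ) * y j ∈ Set.Icc (0:ℝ) 1) ↔
      x - (of V).map (Int.cast : ℤ → ℝ) *ᵥ y ∈ Set.Icc 0 1 := by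
    rw [← Set.pi_univ_Icc, Set.mem_univ_pi]
    rfl
  simp_rw [hcube]
  constructor
  · rintro ⟨y, hy⟩ C - a ha - -
    have haV : (fun i => (a i : ℝ)) ᵥ* (of V).map (Int.cast : ℤ → ℝ) = 0 :=
      intCast_vecMul_eq_zero (funext ha)
    have hlow := dotProduct_le_cubeSupport_of_sub_mulVec_mem hy (c := -fun i => (a i : ℝ))
      (by rw [neg_vecMul, haV, neg_zero])
    rw [neg_dotProduct] at hlow
    exact ⟨neg_le.1 hlow, dotProduct_le_cubeSupport_of_sub_mulVec_mem hy haV⟩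
  · intro H
    rw [exists_sub_mulVec_mem_Icc_iff_isElementary]
    intro e he
    obtain ⟨a, haV, hgcd, hsupp, μ, rfl⟩ := he.exists_primitive_int
    classical
    obtain ⟨hlow, hup⟩ := H {i | a i ≠ 0} (he.isCircuitV (by rw [← hsupp]; ext; simp)) a
      (congrFun haV) hgcd (by simp)
    exact dotProduct_smul_le_cubeSupport hup hlow μ

theorem zonotope_closed_description
    (d n : ℕ) (hd : 1 ≤ d) (hn : 1 ≤ n)
    (V : Fin n → Fin d → ℤ) (hV : GoodGens V) (x : Fin n → ℝ) :
    (∃ y : Fin d → ℝ, ∀ i, x i - ∑ j, (V i j : ℝ) * y j ∈ Set.Icc (0:ℝ) 1) ↔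
    (∀ C : Finset (Fin n), IsCircuitV V C →
      ∀ a : Fin n → ℤ,
        (∀ j, ∑ i, a i * V i j = 0) →
        Finset.univ.gcd a = 1 →
        (∀ i, a i ≠ 0 ↔ i ∈ C) →
        (-(∑ i, max (-(a i : ℝ)) 0) ≤ ∑ i, (a i : ℝ) * x i ∧
          ∑ i, (a i : ℝ) * x i ≤ ∑ i, max ((a i : ℝ)) 0)) :=
  zonotope_closed_description_general d n V x
end

section
/- The number of conic cosets in ℤ^n / A_V^T ℤ^d equals the number of connected components of the complement, in the d-dimensional torus ℝ^d/ℤ^d, of the union over i = 1, …, n of the images of the hyperplanes H_{v_i} = {x ∈ ℝ^d : ⟨v_i, x⟩ = 0} under the quotient map ℝ^d → ℝ^d/ℤ^d. -/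
open Matrix

/-- The integer lattice `ℤ^d` inside `ℝ^d`, as an additive subgroup. -/
def intLattice (d : ℕ) : AddSubgroup (Fin d → ℝ) where
  carrier := {x | ∀ i, ∃ m : ℤ, x i = m}
  add_mem' := by
    rintro x y hx hy i
    obtain ⟨a, ha⟩ := hx i; obtain ⟨b, hb⟩ := hy i
    exact ⟨a + b, by simp [ha, hb]⟩
  zero_mem' := fun i => ⟨0, by simp⟩
  neg_mem' := by
    rintro x hx i
    obtain ⟨a, ha⟩ := hx i
    exact ⟨-a, by simp [ha]⟩

/-- The complement, in the torus `ℝ^d/ℤ^d`, of the union of the images of the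
hyperplanes `H_{v_i} = {x : ⟨v_i, x⟩ = 0}`. -/
def torusComplement {d n : ℕ} (V : Fin n → Fin d → ℤ) :
    Set ((Fin d → ℝ) ⧸ intLattice d) :=
  (⋃ i : Fin n,
    (QuotientAddGroup.mk '' {x : Fin d → ℝ | ∑ j, (V i j : ℝ) * x j = 0}))ᶜ


/-!
If `⟨v_i, y⟩ = k ∈ ℤ`, primitivity of `v_i` gives `c ∈ ℤ^d` with `⟨v_i, c⟩ = 1`, and `y - k c`
lies on `H_{v_i}`. So a point `y` maps into the complement exactly when no `⟨v_i, y⟩` is an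
integer, and there `y ↦ ⌈A_V^T y⌉ + A_V^T ℤ^d` descends to the torus. Its fibres are the images
of the open convex chambers `{y : a_i - 1 < ⟨v_i, y⟩ < a_i}`, hence open and connected, so they
are the connected components. Every value is conic, and a conic class `⌈A_V^T w⌉` is attained at
`w - t z` for small `t > 0`, where `z` pairs positively with every `v_i`; such a `z` exists by
Hahn–Banach because strong convexity keeps `0` out of the convex hull of the `v_i`.
-/

open Filter Topology

theorem Nat.card_connectedComponents_eq_card_range {X Y : Type*} [TopologicalSpace X]
    (f : X → Y) (hopen : ∀ y, IsOpen (f ⁻¹' {y})) (hconn : ∀ y, IsPreconnected (f ⁻¹' {y})) :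
    Nat.card (ConnectedComponents X) = Nat.card (Set.range f) := by
  have hf : IsLocallyConstant f := IsLocallyConstant.iff_isOpen_fiber.2 hopen
  have hker : ∀ x x', connectedComponent x = connectedComponent x' ↔ f x = f x' := by
    refine fun x x' => ⟨fun h => ?_, fun h => ?_⟩
    · exact hf.apply_eq_of_isPreconnected isPreconnected_connectedComponent
        mem_connectedComponent (h ▸ mem_connectedComponent)
    · exact connectedComponent_eq ((hconn (f x)).subset_connectedComponent rfl h.symm)
  exact Nat.card_congr
    ((Quotient.congr (Equiv.refl X) hker).trans (Setoid.quotientKerEquivRange f))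

theorem exists_forall_pos_of_sum_smul_ne_zero {ι E : Type*} [Fintype ι] [NormedAddCommGroup E]
    [NormedSpace ℝ E] (v : ι → E) (hv : ∀ w ∈ stdSimplex ℝ ι, ∑ i, w i • v i ≠ 0) :
    ∃ f : StrongDual ℝ E, ∀ i, 0 < f (v i) := by
  classical
  set K := Fintype.linearCombination ℝ v '' stdSimplex ℝ ι
  have hK : IsCompact K := (isCompact_stdSimplex ℝ ι).image
    (Fintype.linearCombination ℝ v).continuous_of_finiteDimensional
  have h0 : (0 : E) ∉ K := by
    rintro ⟨w, hw, hw0⟩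
    exact hv w hw (by rwa [Fintype.linearCombination_apply] at hw0)
  obtain ⟨f, u, hf0, hfK⟩ :=
    geometric_hahn_banach_point_closed ((convex_stdSimplex ℝ ι).linear_image _) hK.isClosed h0
  refine ⟨f, fun i => (map_zero f ▸ hf0).trans
    (hfK _ ⟨Pi.single i 1, single_mem_stdSimplex ℝ i, ?_⟩)⟩
  simp [Fintype.linearCombination_apply, Pi.single_apply]

abbrev Torus (d : ℕ) := (Fin d → ℝ) ⧸ intLattice d

theorem Torus.mk_eq_mk_iff {d : ℕ} {y y' : Fin d → ℝ} :
    (y : Torus d) = y' ↔ ∃ m : Fin d → ℤ, y' = y + fun j => (m j : ℝ) := by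
  rw [QuotientAddGroup.eq]
  constructor
  · intro h
    choose m hm using h
    refine ⟨m, funext fun j => ?_⟩
    have := hm j
    simp only [Pi.add_apply, Pi.neg_apply] at this ⊢
    linarith
  · rintro ⟨m, rfl⟩ j
    exact ⟨m j, by simp⟩

namespace ToricArrangement

variable {d n : ℕ} (V : Fin n → Fin d → ℤ)

noncomputable def ATR : (Fin d → ℝ) →ₗ[ℝ] (Fin n → ℝ) :=
  Matrix.mulVecLin (Matrix.of fun i j => (V i j : ℝ))

theorem ATR_apply (y : Fin d → ℝ) (i : Fin n) : ATR V y i = ∑ j, (V i j : ℝ) * y j := by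
  simp [ATR, Matrix.mulVec, dotProduct]

theorem ATR_add_intCast (y : Fin d → ℝ) (m : Fin d → ℤ) (i : Fin n) :
    ATR V (y + fun j => (m j : ℝ)) i = ATR V y i + ATZ V m i := by
  simp [ATR_apply, ATZ, Matrix.mulVec, dotProduct, mul_add, Finset.sum_add_distrib]

noncomputable def ceilVec (y : Fin d → ℝ) : Fin n → ℤ := fun i => ⌈ATR V y i⌉

theorem ceilVec_add_intCast (y : Fin d → ℝ) (m : Fin d → ℤ) :
    ceilVec V (y + fun j => (m j : ℝ)) = ceilVec V y + ATZ V m := by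
  funext i
  simp only [ceilVec, ATR_add_intCast, Pi.add_apply]
  exact Int.ceil_add_intCast _ _

def chamber (a : Fin n → ℤ) : Set (Fin d → ℝ) :=
  ATR V ⁻¹' Set.univ.pi fun i => Set.Ioo ((a i : ℝ) - 1) (a i)

variable {V} in
theorem mem_chamber_iff {a : Fin n → ℤ} {y : Fin d → ℝ} :
    y ∈ chamber V a ↔ ∀ i, (a i : ℝ) - 1 < ATR V y i ∧ ATR V y i < a i := by
  simp [chamber]

theorem isOpen_chamber (a : Fin n → ℤ) : IsOpen (chamber V a) :=
  (isOpen_set_pi Set.finite_univ fun _ _ => isOpen_Ioo).preimage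
    (ATR V).continuous_of_finiteDimensional

theorem convex_chamber (a : Fin n → ℤ) : Convex ℝ (chamber V a) :=
  (convex_pi fun _ _ => convex_Ioo _ _).linear_preimage _

variable {V}

theorem ceilVec_eq_of_mem_chamber {a : Fin n → ℤ} {y : Fin d → ℝ} (hy : y ∈ chamber V a) :
    ceilVec V y = a :=
  funext fun i => Int.ceil_eq_iff.2
    ⟨((mem_chamber_iff.1 hy) i).1, ((mem_chamber_iff.1 hy) i).2.le⟩

theorem mem_chamber_ceilVec_iff {y : Fin d → ℝ} :
    y ∈ chamber V (ceilVec V y) ↔ ∀ i (k : ℤ), ATR V y i ≠ k := by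
  simp only [mem_chamber_iff, ceilVec]
  refine forall_congr' fun i => ⟨fun h k hk => ?_, fun h => ⟨?_, ?_⟩⟩
  · simp [hk] at h
  · linarith [Int.ceil_lt_add_one (ATR V y i)]
  · exact (Int.le_ceil _).lt_of_ne (h _)

theorem add_intCast_mem_chamber {a : Fin n → ℤ} {y : Fin d → ℝ} (hy : y ∈ chamber V a)
    (m : Fin d → ℤ) : (y + fun j => (m j : ℝ)) ∈ chamber V (a + ATZ V m) := by
  rw [mem_chamber_iff] at hy ⊢
  intro i
  simp only [ATR_add_intCast, Pi.add_apply, Int.cast_add]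
  constructor <;> linarith [hy i]

variable (V) in
noncomputable def ceilClass : Torus d → (Fin n → ℤ) ⧸ LinearMap.range (ATZ V) :=
  Quotient.lift (fun y => Submodule.Quotient.mk (ceilVec V y)) fun y y' h => by
    obtain ⟨m, rfl⟩ := Torus.mk_eq_mk_iff.1 (Quotient.sound h)
    rw [ceilVec_add_intCast, Submodule.Quotient.eq]
    exact ⟨-m, by simp⟩

theorem ceilClass_mk (y : Fin d → ℝ) :
    ceilClass V (y : Torus d) = Submodule.Quotient.mk (ceilVec V y) :=
  rfl

theorem mk_mem_torusComplement_iff (hprim : ∀ i, Finset.univ.gcd (V i) = 1) {y : Fin d → ℝ} :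
    (y : Torus d) ∈ torusComplement V ↔ ∀ i (k : ℤ), ATR V y i ≠ k := by
  simp only [torusComplement, Set.mem_compl_iff, Set.mem_iUnion, Set.mem_image,
    Set.mem_ofPred_eq, ← ATR_apply]
  push Not
  refine ⟨fun h i k hk => ?_, fun h i x hx hxy => ?_⟩
  · obtain ⟨c, hc⟩ := Finset.gcd_eq_sum_mul Finset.univ (V i)
    refine h i (y + fun j => ((-k * c j : ℤ) : ℝ)) ?_ (Torus.mk_eq_mk_iff.2 ⟨_, rfl⟩).symm
    have hkc : ∑ j, V i j * (-k * c j) = -k :=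
      calc ∑ j, V i j * (-k * c j) = -k * ∑ j, V i j * c j := by
            rw [Finset.mul_sum]; exact Finset.sum_congr rfl fun j _ => by ring
        _ = -k := by rw [← hc, hprim i, mul_one]
    rw [ATR_add_intCast, hk, ATZ, Matrix.mulVecLin_apply, Matrix.mulVec, dotProduct]
    simp only [Matrix.of_apply, hkc, Int.cast_neg, add_neg_cancel]
  · obtain ⟨m, rfl⟩ := Torus.mk_eq_mk_iff.1 hxy
    exact h i (ATZ V m i) (by rw [ATR_add_intCast, hx, zero_add])

theorem mem_image_chamber_iff (hprim : ∀ i, Finset.univ.gcd (V i) = 1) {q : Torus d}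
    {a : Fin n → ℤ} :
    q ∈ (↑) '' chamber V a ↔ q ∈ torusComplement V ∧ ceilClass V q = Submodule.Quotient.mk a := by
  constructor
  · rintro ⟨y, hy, rfl⟩
    rw [ceilClass_mk, ceilVec_eq_of_mem_chamber hy, mk_mem_torusComplement_iff hprim,
      ← mem_chamber_ceilVec_iff, ceilVec_eq_of_mem_chamber hy]
    exact ⟨hy, rfl⟩
  · rintro ⟨hq, hcl⟩
    obtain ⟨y, rfl⟩ := QuotientAddGroup.mk_surjective q
    rw [ceilClass_mk, Submodule.Quotient.eq] at hcl
    obtain ⟨m, hm⟩ := hcl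
    have hy := add_intCast_mem_chamber ((mk_mem_torusComplement_iff hprim).1 hq |>
      mem_chamber_ceilVec_iff.2) (-m)
    rw [map_neg, hm, show ceilVec V y + -(ceilVec V y - a) = a by abel] at hy
    exact ⟨_, hy, Torus.mk_eq_mk_iff.2 ⟨m, by funext j; simp⟩⟩

theorem preimage_ceilClass_mk (hprim : ∀ i, Finset.univ.gcd (V i) = 1) (a : Fin n → ℤ) :
    (fun x : torusComplement V => ceilClass V x) ⁻¹' {Submodule.Quotient.mk a} =
      Subtype.val ⁻¹' ((↑) '' chamber V a) := by
  ext x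
  simp [mem_image_chamber_iff hprim, x.2]

theorem isOpen_preimage_ceilClass (hprim : ∀ i, Finset.univ.gcd (V i) = 1)
    (α : (Fin n → ℤ) ⧸ LinearMap.range (ATZ V)) :
    IsOpen ((fun x : torusComplement V => ceilClass V x) ⁻¹' {α}) := by
  obtain ⟨a, rfl⟩ := Submodule.Quotient.mk_surjective _ α
  rw [preimage_ceilClass_mk hprim]
  exact (QuotientAddGroup.isOpenMap_coe _ (isOpen_chamber V a)).preimage continuous_subtype_val

theorem isPreconnected_preimage_ceilClass (hprim : ∀ i, Finset.univ.gcd (V i) = 1)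
    (α : (Fin n → ℤ) ⧸ LinearMap.range (ATZ V)) :
    IsPreconnected ((fun x : torusComplement V => ceilClass V x) ⁻¹' {α}) := by
  obtain ⟨a, rfl⟩ := Submodule.Quotient.mk_surjective _ α
  have hsub : (↑) '' chamber V a ⊆ torusComplement V := fun _ hq =>
    ((mem_image_chamber_iff hprim).1 hq).1
  rw [preimage_ceilClass_mk hprim, ← Topology.IsInducing.subtypeVal.isPreconnected_image,
    Subtype.image_preimage_coe, Set.inter_eq_right.2 hsub]
  exact (convex_chamber V a).isPreconnected.image _
    QuotientAddGroup.continuous_mk.continuousOn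

theorem exists_forall_pos_ATR (hnz : ∀ i, V i ≠ 0)
    (hsalient : ∀ x ∈ coneOf V, -x ∈ coneOf V → x = 0) : ∃ z, ∀ i, 0 < ATR V z i := by
  classical
  have hv : ∀ w ∈ stdSimplex ℝ (Fin n), ∑ i, w i • rVec (V i) ≠ 0 := by
    intro w hw hsum
    obtain ⟨i, hi⟩ : ∃ i, w i ≠ 0 := by
      by_contra! h
      simpa [h] using hw.2
    have hx : w i • rVec (V i) ∈ coneOf V :=
      ⟨Pi.single i (w i), fun j => by by_cases hj : j = i <;> simp [hj, hw.1 i], by simp⟩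
    have hnx : -(w i • rVec (V i)) ∈ coneOf V := by
      refine ⟨w - Pi.single i (w i), fun j => ?_, ?_⟩
      · by_cases hj : j = i <;> simp [hj, hw.1 j]
      · simp [sub_smul, Finset.sum_sub_distrib, hsum]
    have hVi := (smul_eq_zero.1 (hsalient _ hx hnx)).resolve_left hi
    exact hnz i (funext fun j => by simpa [rVec] using congrFun hVi j)
  obtain ⟨f, hf⟩ := exists_forall_pos_of_sum_smul_ne_zero (fun i => rVec (V i)) hv
  refine ⟨fun j => f fun k => if j = k then 1 else 0, fun i => ?_⟩
  rw [ATR_apply]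
  convert hf i using 1
  rw [← ContinuousLinearMap.coe_coe, LinearMap.pi_apply_eq_sum_univ]
  simp [rVec]

theorem chamber_ceilVec_nonempty {z : Fin d → ℝ} (hz : ∀ i, 0 < ATR V z i) (w : Fin d → ℝ) :
    (chamber V (ceilVec V w)).Nonempty := by
  have hlim : Tendsto (fun t : ℝ => ATR V (w - t • z)) (𝓝[>] 0) (𝓝 (ATR V w)) := by
    have hcont : Continuous fun t : ℝ => ATR V (w - t • z) :=
      (ATR V).continuous_of_finiteDimensional.comp (by fun_prop)
    simpa using (hcont.tendsto 0).mono_left nhdsWithin_le_nhds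
  have hpos : ∀ᶠ t in 𝓝[>] (0 : ℝ), 0 < t := self_mem_nhdsWithin
  have hmem : ∀ᶠ t in 𝓝[>] (0 : ℝ), w - t • z ∈ chamber V (ceilVec V w) := by
    simp only [mem_chamber_iff, ceilVec]
    refine eventually_all.2 fun i => ?_
    refine ((tendsto_pi_nhds.1 hlim i).eventually_const_lt ?_).and (hpos.mono fun t ht => ?_)
    · linarith [Int.ceil_lt_add_one (ATR V w i)]
    · simp only [map_sub, map_smul, Pi.sub_apply, Pi.smul_apply, smul_eq_mul]
      nlinarith [Int.le_ceil (ATR V w i), hz i]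
  obtain ⟨t, ht⟩ := hmem.exists
  exact ⟨_, ht⟩

theorem range_ceilClass (hnz : ∀ i, V i ≠ 0) (hprim : ∀ i, Finset.univ.gcd (V i) = 1)
    (hsalient : ∀ x ∈ coneOf V, -x ∈ coneOf V → x = 0) :
    Set.range (fun x : torusComplement V => ceilClass V x) = {α | IsConic V α} := by
  ext α
  constructor
  · rintro ⟨⟨q, -⟩, rfl⟩
    obtain ⟨y, rfl⟩ := QuotientAddGroup.mk_surjective q
    exact ⟨ceilVec V y, rfl, y, fun i => by rw [← ATR_apply]; rfl⟩
  · rintro ⟨_, rfl, w, hw⟩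
    obtain ⟨z, hz⟩ := exists_forall_pos_ATR hnz hsalient
    obtain ⟨y, hy⟩ := chamber_ceilVec_nonempty hz w
    have hq := (mem_image_chamber_iff hprim).1 ⟨y, hy, rfl⟩
    refine ⟨⟨_, hq.1⟩, hq.2.trans ?_⟩
    congr 1
    funext i
    rw [hw, ceilVec, ATR_apply]

end ToricArrangement

theorem number_of_conic_classes_eq_components_of_toric_arrangement_complement_general
    (d n : ℕ)
    (V : Fin n → Fin d → ℤ) (hV : GoodGens V) :
    {α : (Fin n → ℤ) ⧸ LinearMap.range (ATZ V) | IsConic V α}.ncard =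
      Nat.card (ConnectedComponents (torusComplement V)) := by
  obtain ⟨-, hnz, hprim, -, hsalient⟩ := hV
  rw [Nat.card_connectedComponents_eq_card_range _
      (ToricArrangement.isOpen_preimage_ceilClass hprim)
      (ToricArrangement.isPreconnected_preimage_ceilClass hprim),
    ToricArrangement.range_ceilClass hnz hprim hsalient, Nat.card_coe_set_eq]

theorem number_of_conic_classes_eq_components_of_toric_arrangement_complement
    (d n : ℕ) (hd : 1 ≤ d) (hn : 1 ≤ n)
    (V : Fin n → Fin d → ℤ) (hV : GoodGens V) :
    {α : (Fin n → ℤ) ⧸ LinearMap.range (ATZ V) | IsConic V α}.ncard =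
      Nat.card (ConnectedComponents (torusComplement V)) :=
  number_of_conic_classes_eq_components_of_toric_arrangement_complement_general d n V hV
end

section
/- Let d ≥ 1, let μ_0, …, μ_m ∈ {1,…,d} be distinct vertices (m ≥ 0), and consider vectors h_0 = s_0·χ_{μ_0} ∈ ℤ^d, h_j = s_j·χ_{μ_{j−1}} + s'_j·χ_{μ_j} ∈ ℤ^d for 1 ≤ j ≤ m, and h_{m+1} = s_{m+1}·χ_{μ_m} ∈ ℤ^d, with all signs s_j, s'_j ∈ {+1,−1} (two halfedges joined by a path). Define ρ_0 := 1, ρ_1 := −s_0·s_1·ρ_0, ρ_{j+1} := −s'_j·s_{j+1}·ρ_j for 1 ≤ j ≤ m. Then Σ_{j=0}^{m+1} ρ_j·h_j = 0 in ℤ^d; in particular the vector (ρ_0, …, ρ_{m+1}) ∈ {±1}^{m+2} is a primitive element of the kernel of the d×(m+2) matrix with columns h_0, …, h_{m+1}, with full support. (This is the case of the lemma on circuit kernel vectors for a circuit consisting of two halfedges joined by a path.) -/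
/-- The kernel vector of a circuit consisting of two halfedges joined by a path:
if `h_0 = s_0·χ_{μ_0}`, `h_j = s_j·χ_{μ_{j−1}} + s'_j·χ_{μ_j}` for `1 ≤ j ≤ m`,
`h_{m+1} = s_{m+1}·χ_{μ_m}` and `ρ` is defined by `ρ_0 = 1`, `ρ_1 = −s_0·s_1·ρ_0`,
`ρ_{j+1} = −s'_j·s_{j+1}·ρ_j` for `1 ≤ j ≤ m`, then `Σ_{j=0}^{m+1} ρ_j·h_j = 0`,
and `ρ` is a `±1`-vector (hence a primitive kernel element with full support). -/
theorem two_halfedges_path_kernel_vector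
    (d m : ℕ) (hd : 1 ≤ d)
    (μ : ℕ → Fin d)
    (hμinj : ∀ j j', j ≤ m → j' ≤ m → μ j = μ j' → j = j')
    (s s' : ℕ → ℤ)
    (hs : ∀ j, s j = 1 ∨ s j = -1) (hs' : ∀ j, s' j = 1 ∨ s' j = -1)
    (h : ℕ → Fin d → ℤ)
    (h0 : h 0 = s 0 • Pi.single (μ 0) (1 : ℤ))
    (hmid : ∀ j, 1 ≤ j → j ≤ m →
      h j = s j • Pi.single (μ (j - 1)) (1 : ℤ) + s' j • Pi.single (μ j) (1 : ℤ))
    (hlast : h (m + 1) = s (m + 1) • Pi.single (μ m) (1 : ℤ))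
    (ρ : ℕ → ℤ) (hρ0 : ρ 0 = 1) (hρ1 : ρ 1 = -(s 0) * s 1 * ρ 0)
    (hρ : ∀ j, 1 ≤ j → j ≤ m → ρ (j + 1) = -(s' j) * s (j + 1) * ρ j) :
    (∀ v : Fin d, ∑ j ∈ Finset.range (m + 2), ρ j * h j v = 0) ∧
    (∀ j ≤ m + 1, ρ j = 1 ∨ ρ j = -1) := by
  -- unified recursion for ρ, with `t n := if n = 0 then s 0 else s' n`
  have hρs : ∀ n ≤ m, ρ (n + 1) = -(if n = 0 then s 0 else s' n) * s (n + 1) * ρ n := by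
    intro n hn
    rcases Nat.eq_zero_or_pos n with h0' | h1'
    · subst h0'; simpa using hρ1
    · rw [if_neg (Nat.pos_iff_ne_zero.mp h1')]
      exact hρ n h1' hn
  have ht : ∀ n, (if n = 0 then s 0 else s' n) = 1 ∨ (if n = 0 then s 0 else s' n) = -1 := by
    intro n; split
    · exact hs 0
    · exact hs' n
  constructor
  · intro v
    have key : ∀ k ≤ m, ∑ j ∈ Finset.range (k + 1), ρ j * h j v =
        ρ k * (if k = 0 then s 0 else s' k) * (if v = μ k then 1 else 0) := by
      intro k hk
      induction k with
      | zero =>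
        rw [Finset.sum_range_one, h0, if_pos rfl]
        simp only [Pi.smul_apply, Pi.single_apply, smul_eq_mul]
        split_ifs <;> ring
      | succ n ih =>
        have hn : n ≤ m := Nat.le_of_succ_le hk
        rw [Finset.sum_range_succ, ih hn, hmid (n + 1) (Nat.le_add_left 1 n) hk]
        have hr := hρs n hn
        simp only [Nat.add_sub_cancel, Pi.add_apply, Pi.smul_apply, Pi.single_apply,
          smul_eq_mul, if_neg (Nat.succ_ne_zero n)]
        rcases hs (n + 1) with h2 | h2 <;> rw [hr, h2] <;> split_ifs <;> ring
    rw [show m + 2 = (m + 1) + 1 from rfl, Finset.sum_range_succ, key m le_rfl, hlast]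
    have hr := hρs m le_rfl
    simp only [Pi.smul_apply, Pi.single_apply, smul_eq_mul]
    rcases hs (m + 1) with h2 | h2 <;> rw [hr, h2] <;> split_ifs <;> ring
  · intro j hj
    induction j with
    | zero => left; exact hρ0
    | succ n ih =>
      have hn : n ≤ m := Nat.lt_succ_iff.mp hj
      have h1 := ih (Nat.le_of_succ_le hj)
      have hr := hρs n hn
      rcases h1 with h1 | h1 <;> rcases hs (n + 1) with h2 | h2 <;>
        rcases ht n with h3 | h3 <;> rw [hr, h1, h2, h3] <;> norm_num
end

section
/- Let Σ be a connected bidirected graph on the vertex set {1,…,d} with finite edge set E, m = #E, and incidence matrix A ∈ ℤ^{{1,…,d}×E}. Then the cokernel ℤ^E / A^T ℤ^d is isomorphic as an abelian group to: (1) ℤ^{m−d+1} if Σ has no halfedges and every circle of Σ is positive; (2) ℤ^{m−d} if Σ has at least one halfedge; (3) ℤ^{m−d} ⊕ ℤ/2ℤ if Σ has no halfedges and has at least one negative circle. (This computes the divisor class group Cl(R_P) of the toric ring of a signed poset P with Hasse diagram Σ.) -/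
open Matrix

/-- A column of an incidence matrix corresponding to a halfedge at some vertex. -/
def IsHalfedgeCol {d : ℕ} (c : Fin d → ℤ) : Prop :=
  ∃ (i : Fin d) (s : ℤ), (s = 1 ∨ s = -1) ∧ c = s • Pi.single i (1 : ℤ)

/-- A column of an incidence matrix corresponding to an ordinary edge joining two
distinct vertices. -/
def IsEdgeCol {d : ℕ} (c : Fin d → ℤ) : Prop :=
  ∃ (i j : Fin d) (s s' : ℤ), i ≠ j ∧ (s = 1 ∨ s = -1) ∧ (s' = 1 ∨ s' = -1) ∧
    c = s • Pi.single i (1 : ℤ) + s' • Pi.single j (1 : ℤ)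

/-- `A` is the incidence matrix of a bidirected graph: every column is a halfedge
column or an ordinary edge column. -/
def IsBidirected {d : ℕ} {E : Type*} (A : Matrix (Fin d) E ℤ) : Prop :=
  ∀ e, IsHalfedgeCol (fun v => A v e) ∨ IsEdgeCol (fun v => A v e)

/-- The bidirected graph has a halfedge. -/
def HasHalfedge {d : ℕ} {E : Type*} (A : Matrix (Fin d) E ℤ) : Prop :=
  ∃ e, IsHalfedgeCol (fun v => A v e)

/-- Connectivity of the underlying multigraph of ordinary edges. -/
def ConnectedInc {d : ℕ} {E : Type*} (A : Matrix (Fin d) E ℤ) : Prop :=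
  ∀ i j : Fin d,
    Relation.ReflTransGen (fun u v => u ≠ v ∧ ∃ e, A u e ≠ 0 ∧ A v e ≠ 0) i j

/-- `(u 0, …, u (k-1) ; f 0, …, f (k-1))` is a circle of the bidirected graph with
incidence matrix `A`: distinct vertices, distinct ordinary edges, with `f t` joining
`u t` and `u ((t+1) % k)`. -/
def IsCircle {d : ℕ} {E : Type*} (A : Matrix (Fin d) E ℤ)
    (k : ℕ) (u : ℕ → Fin d) (f : ℕ → E) : Prop :=
  2 ≤ k ∧
  (∀ t t', t < k → t' < k → u t = u t' → t = t') ∧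
  (∀ t t', t < k → t' < k → f t = f t' → t = t') ∧
  (∀ t < k, A (u t) (f t) ≠ 0 ∧ A (u ((t + 1) % k)) (f t) ≠ 0 ∧
    ∀ v, A v (f t) ≠ 0 → v = u t ∨ v = u ((t + 1) % k))

/-- The product of the signs `σ(f_t) = −A(u_t, f_t)·A(u_{t+1}, f_t)` of the edges of a
circle; the circle is positive if this is `1` and negative if it is `-1`. -/
def circleSign {d : ℕ} {E : Type*} (A : Matrix (Fin d) E ℤ)
    (k : ℕ) (u : ℕ → Fin d) (f : ℕ → E) : ℤ :=
  ∏ t ∈ Finset.range k, (-(A (u t) (f t) * A (u ((t + 1) % k)) (f t)))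

/-!
Write `T = Aᵀ : ℤ^d → ℤ^E`. Over any commutative ring, a vector `z` with `z ᵥ* A = 0`
satisfies `z q = σ(e) z p` along every ordinary edge `e` from `p` to `q`, so by connectivity it
is determined by a single coordinate. A halfedge forces `z = 0`; a negative circle forces
`2 z = 0`, hence `z` constant; if all circles are positive, every closed walk has positive sign
(shorten it at a repeated vertex until it is a circle), so signs of walks from a base vertex
define a `±1`-vector `η` with `η ᵥ* A = 0`, and `z` is a multiple of `η`.

The rank of the cokernel is `#E - d + rank (ker T)`. For its torsion, `n • x = T y` says that
`y mod n` is such a kernel vector over `ZMod n`; lifting it shows `x ∈ range T`, except in the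
negative case, where `T 1 = 2 x₀` and `x ∈ range T + ℤ x₀` with `x₀ ∉ range T`: the torsion is
`ℤ/2`, generated by the class of `x₀`.
-/

open Finset Module Submodule

lemma Matrix.map_intCast_int {m n : Type*} (A : Matrix m n ℤ) : A.map (Int.cast : ℤ → ℤ) = A :=
  Matrix.map_id' A

lemma Matrix.intCast_vecMul {ι κ R : Type*} [Fintype ι] [CommRing R] (B : Matrix ι κ ℤ)
    (y : ι → ℤ) : (fun i => (y i : R)) ᵥ* B.map Int.cast = fun e => ((y ᵥ* B) e : R) :=
  funext fun e => (RingHom.map_vecMul (Int.castRingHom R) B y e).symm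

theorem Module.nonempty_linearEquiv_torsion_prod {R M : Type*} [CommRing R] [IsDomain R]
    [IsPrincipalIdealRing R] [AddCommGroup M] [Module R M] [Module.Finite R M] :
    Nonempty (M ≃ₗ[R] torsion R M × (Fin (finrank R M) → R)) := by
  have hrank : finrank R (M ⧸ torsion R M) = finrank R (Fin (finrank R M) → R) := by
    rw [finrank_quotient_eq_of_le_torsion le_rfl, finrank_fin_fun]
  obtain ⟨l, hl⟩ := projective_lifting_property (torsion R M).mkQ LinearMap.id
    (torsion R M).mkQ_surjective
  exact ⟨(lequivProdOfRightSplitExact (torsion R M).injective_subtype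
    (by rw [range_subtype, ker_mkQ]) hl).symm.trans
    ((LinearEquiv.refl R _).prodCongr (LinearEquiv.ofFinrankEq _ _ hrank))⟩

theorem nonempty_addEquiv_zmod_two {K : Type*} [AddCommGroup K] {t : K} (ht : t ≠ 0)
    (hK : ∀ x, x = 0 ∨ x = t) : Nonempty (K ≃+ ZMod 2) := by
  have hcard : Nat.card K = 2 :=
    Nat.card_eq_two_iff.mpr ⟨0, t, ht.symm, Set.eq_univ_of_forall fun x => by simpa using hK x⟩
  have hgen : ∀ x, x ∈ AddSubgroup.zmultiples t := fun x => by
    rcases hK x with h | h <;> rw [h]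
    exacts [zero_mem _, AddSubgroup.mem_zmultiples t]
  exact ⟨(zmodAddEquivOfGenerator hgen hcard).symm⟩

theorem nonempty_addEquiv_fin_of_torsion_eq_bot {M : Type*} [AddCommGroup M]
    [Module.Finite ℤ M] (h : torsion ℤ M = ⊥) {n : ℕ} (hn : finrank ℤ M = n) :
    Nonempty (M ≃+ (Fin n → ℤ)) :=
  have : IsTorsionFree ℤ M := isTorsionFree_iff_torsion_eq_bot.mpr h
  ⟨(LinearEquiv.ofFinrankEq _ _ (by rw [hn, finrank_fin_fun])).toAddEquiv⟩

theorem nonempty_addEquiv_fin_prod_zmod_two {M : Type*} [AddCommGroup M] [Module.Finite ℤ M]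
    {t : M} (ht : t ≠ 0) (ht₂ : t + t = 0) (h : torsion ℤ M ≤ ℤ ∙ t) {n : ℕ}
    (hn : finrank ℤ M = n) : Nonempty (M ≃+ (Fin n → ℤ) × ZMod 2) := by
  obtain ⟨e⟩ := Module.nonempty_linearEquiv_torsion_prod (R := ℤ) (M := M)
  have htt : t ∈ torsion ℤ M :=
    (mem_torsion_iff t).mpr ⟨⟨2, mem_nonZeroDivisors_of_ne_zero two_ne_zero⟩, by
      rwa [Submonoid.smul_def, two_smul]⟩
  have hK : ∀ x ∈ torsion ℤ M, x = 0 ∨ x = t := fun x hx => by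
    obtain ⟨a, rfl⟩ := mem_span_singleton.mp (h hx)
    obtain ⟨b, rfl | rfl⟩ := Int.even_or_odd' a
    · left
      rw [mul_comm, mul_smul, two_smul, ht₂, smul_zero]
    · right
      rw [add_smul, one_smul, mul_comm, mul_smul, two_smul, ht₂, smul_zero, zero_add]
  obtain ⟨e₂⟩ := nonempty_addEquiv_zmod_two (t := (⟨t, htt⟩ : torsion ℤ M))
    (by simpa using ht) fun x => (hK x x.2).imp Subtype.ext Subtype.ext
  subst hn
  exact ⟨e.toAddEquiv.trans ((e₂.prodCongr (AddEquiv.refl _)).trans AddEquiv.prodComm)⟩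

theorem finrank_quotient_range_add {ι κ : Type*} [Fintype ι] [Fintype κ]
    (T : (ι → ℤ) →ₗ[ℤ] (κ → ℤ)) :
    finrank ℤ ((κ → ℤ) ⧸ LinearMap.range T) + Fintype.card ι =
      Fintype.card κ + finrank ℤ (LinearMap.ker T) := by
  have h₁ := (LinearMap.range T).finrank_quotient_add_finrank
  have h₂ := (LinearMap.ker T).finrank_quotient_add_finrank
  rw [T.quotKerEquivRange.finrank_eq] at h₂
  simp only [finrank_fintype_fun_eq_card] at h₁ h₂
  omega

/-- If `y ᵥ* B ≡ 0 mod n` then `y mod n = c • η` with `s c = 0`; lifting `c` to `c' : ℤ` gives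
`y = c' • η + n • w` and `s c' = n k`, whence `n • x = y ᵥ* B = n • (k • x₀ + w ᵥ* B)`. -/
theorem torsion_quotient_range_vecMulLinear_le {ι κ : Type*} [Fintype ι] (B : Matrix ι κ ℤ)
    (η : ι → ℤ) (x₀ : κ → ℤ) (s : ℤ) (hη : η ᵥ* B = s • x₀)
    (hker : ∀ (n : ℕ) (z : ι → ZMod n), z ᵥ* B.map (Int.cast : ℤ → ZMod n) = 0 →
      ∃ c : ZMod n, (s : ZMod n) * c = 0 ∧ z = c • fun i => (η i : ZMod n)) :
    torsion ℤ ((κ → ℤ) ⧸ LinearMap.range B.vecMulLinear) ≤ ℤ ∙ Submodule.Quotient.mk x₀ := by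
  intro q hq
  obtain ⟨x, rfl⟩ := Submodule.Quotient.mk_surjective _ q
  obtain ⟨⟨a, ha⟩, hax⟩ := (mem_torsion_iff _).mp hq
  have ha0 : a ≠ 0 := nonZeroDivisors.ne_zero ha
  obtain ⟨y, hy⟩ : a • x ∈ LinearMap.range B.vecMulLinear := by
    rwa [← Submodule.Quotient.mk_eq_zero, Submodule.Quotient.mk_smul]
  rw [vecMulLinear_apply] at hy
  have hcast : ∀ b : ℤ, a ∣ b ↔ (b : ZMod a.natAbs) = 0 := fun b => by
    rw [ZMod.intCast_zmod_eq_zero_iff_dvd, Int.natAbs_dvd]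
  obtain ⟨c, hsc, hyc⟩ := hker a.natAbs (fun i => (y i : ZMod a.natAbs)) <| by
    rw [Matrix.intCast_vecMul, hy]
    funext e
    simp [(hcast a).mp dvd_rfl]
  set c' : ℤ := c.cast
  have hc' : (c' : ZMod a.natAbs) = c := ZMod.intCast_zmod_cast c
  choose w hw using fun i => (hcast (y i - c' * η i)).mpr <| by
    simpa [hc', sub_eq_zero] using congrFun hyc i
  obtain ⟨k, hk⟩ := (hcast (s * c')).mpr (by simpa [hc'] using hsc)
  have hyw : y = c' • η + a • w := funext fun i => by
    simp only [Pi.add_apply, Pi.smul_apply, smul_eq_mul]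
    linarith [hw i]
  refine mem_span_singleton.mpr ⟨k, ?_⟩
  rw [← Submodule.Quotient.mk_smul, eq_comm, Submodule.Quotient.eq]
  refine ⟨w, smul_right_injective _ ha0 ?_⟩
  simp only [vecMulLinear_apply, ← smul_vecMul]
  rw [show a • w = y - c' • η by rw [hyw]; abel, sub_vecMul, hy, smul_vecMul, hη, smul_smul,
    mul_comm, hk, smul_sub, mul_smul]

theorem torsion_quotient_range_vecMulLinear_eq_bot {ι κ : Type*} [Fintype ι] (B : Matrix ι κ ℤ)
    (η : ι → ℤ) (hη : η ᵥ* B = 0)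
    (hker : ∀ (n : ℕ) (z : ι → ZMod n), z ᵥ* B.map (Int.cast : ℤ → ZMod n) = 0 →
      ∃ c : ZMod n, z = c • fun i => (η i : ZMod n)) :
    torsion ℤ ((κ → ℤ) ⧸ LinearMap.range B.vecMulLinear) = ⊥ := by
  have h := torsion_quotient_range_vecMulLinear_le B η 0 0 (by rw [hη, zero_smul])
    fun n z hz => (hker n z hz).imp fun c hc => ⟨by simp, hc⟩
  rwa [Submodule.Quotient.mk_zero, span_zero_singleton, le_bot_iff] at h

section BidirectedGraph

variable {d : ℕ} {E : Type*} {A : Matrix (Fin d) E ℤ} {R : Type*} [CommRing R] {z : Fin d → R}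
  {k : ℕ} {u u' : ℕ → Fin d} {f f' : ℕ → E}

def IsStep (A : Matrix (Fin d) E ℤ) (p q : Fin d) (e : E) : Prop :=
  p ≠ q ∧ A p e ≠ 0 ∧ A q e ≠ 0

def edgeSign (A : Matrix (Fin d) E ℤ) (p q : Fin d) (e : E) : ℤ :=
  -(A p e * A q e)

lemma edgeSign_comm (p q : Fin d) (e : E) : edgeSign A q p e = edgeSign A p q e := by
  rw [edgeSign, edgeSign, mul_comm]

lemma IsStep.symm {p q : Fin d} {e : E} (h : IsStep A p q e) : IsStep A q p e :=
  ⟨h.1.symm, h.2.2, h.2.1⟩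

lemma halfedgeCol_apply {c : Fin d → ℤ} {i : Fin d} {s : ℤ} (hc : c = s • Pi.single i 1)
    (v : Fin d) : c v = if v = i then s else 0 := by
  simp [hc, Pi.single_apply]

lemma edgeCol_apply {c : Fin d → ℤ} {i j : Fin d} {s s' : ℤ}
    (hc : c = s • Pi.single i 1 + s' • Pi.single j 1) (v : Fin d) :
    c v = (if v = i then s else 0) + (if v = j then s' else 0) := by
  simp [hc, Pi.single_apply]

lemma IsBidirected.entries_of_isStep (hA : IsBidirected A) {p q : Fin d} {e : E}
    (h : IsStep A p q e) :
    IsUnit (A p e) ∧ IsUnit (A q e) ∧ ∀ v, A v e ≠ 0 → v = p ∨ v = q := by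
  obtain ⟨hpq, hp, hq⟩ := h
  rcases hA e with ⟨i, s, -, hc⟩ | ⟨i, j, s, s', hij, hs, hs', hc⟩
  · simp only [halfedgeCol_apply hc] at hp hq
    grind
  · simp only [edgeCol_apply hc, Int.isUnit_iff] at hp hq ⊢
    grind

lemma IsBidirected.exists_isStep (hA : IsBidirected A) (hnh : ¬ HasHalfedge A) (e : E) :
    ∃ p q, IsStep A p q e := by
  rcases hA e with hh | ⟨i, j, s, s', hij, hs, hs', hc⟩
  · exact absurd ⟨e, hh⟩ hnh
  · refine ⟨i, j, hij, ?_, ?_⟩ <;> simp [edgeCol_apply hc, hij, hij.symm] <;> omega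

lemma IsBidirected.isUnit_edgeSign (hA : IsBidirected A) {p q : Fin d} {e : E}
    (h : IsStep A p q e) : IsUnit (edgeSign A p q e) := by
  obtain ⟨hp, hq, -⟩ := hA.entries_of_isStep h
  exact (hp.mul hq).neg

lemma IsBidirected.vecMul_apply_of_isStep (hA : IsBidirected A) {p q : Fin d} {e : E}
    (h : IsStep A p q e) (z : Fin d → R) :
    (z ᵥ* A.map Int.cast) e = z p * A p e + z q * A q e :=
  Fintype.sum_eq_add p q h.1 fun v hv => by
    rcases eq_or_ne (A v e) 0 with h0 | h0
    · simp [h0]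
    · rcases (hA.entries_of_isStep h).2.2 v h0 with rfl | rfl <;> simp at hv

lemma IsBidirected.exists_vecMul_one_eq_two_smul (hA : IsBidirected A)
    (hnh : ¬ HasHalfedge A) : ∃ x₀ : E → ℤ, 1 ᵥ* A = (2 : ℤ) • x₀ := by
  have h : ∀ e, Even ((1 ᵥ* A) e) := fun e => by
    obtain ⟨p, q, h⟩ := hA.exists_isStep hnh e
    obtain ⟨hp, hq, -⟩ := hA.entries_of_isStep h
    have hsum := hA.vecMul_apply_of_isStep h (1 : Fin d → ℤ)
    rw [Matrix.map_intCast_int] at hsum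
    rw [hsum]
    rcases Int.isUnit_iff.mp hp with h₁ | h₁ <;> rcases Int.isUnit_iff.mp hq with h₂ | h₂ <;>
      simp [h₁, h₂]
  choose x₀ hx₀ using h
  exact ⟨x₀, funext fun e => by simp [hx₀ e, two_mul]⟩

lemma IsBidirected.ker_apply_of_isStep (hA : IsBidirected A) (hz : z ᵥ* A.map Int.cast = 0)
    {p q : Fin d} {e : E} (h : IsStep A p q e) : z q = edgeSign A p q e * z p := by
  have hsum := congrFun hz e
  rw [hA.vecMul_apply_of_isStep h, Pi.zero_apply] at hsum
  have hq : (A q e : R) * A q e = 1 := by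
    rw [← Int.cast_mul, Int.isUnit_mul_self (hA.entries_of_isStep h).2.1, Int.cast_one]
  simp only [edgeSign, Int.cast_neg, Int.cast_mul]
  linear_combination (A q e : R) * hsum - z q * hq

lemma IsBidirected.exists_ker_apply_eq (hA : IsBidirected A) (hconn : ConnectedInc A)
    (hz : z ᵥ* A.map Int.cast = 0) (i j : Fin d) : ∃ ε : ℤ, IsUnit ε ∧ z j = ε * z i := by
  induction hconn i j with
  | refl => exact ⟨1, isUnit_one, by simp⟩
  | tail _ hstep ih =>
    obtain ⟨ε, hε, hzj⟩ := ih
    obtain ⟨hne, e, hp, hq⟩ := hstep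
    have h : IsStep A _ _ e := ⟨hne, hp, hq⟩
    refine ⟨edgeSign A _ _ e * ε, (hA.isUnit_edgeSign h).mul hε, ?_⟩
    rw [hA.ker_apply_of_isStep hz h, hzj]
    push_cast
    ring

lemma IsBidirected.ker_eq_zero_of_apply_eq_zero (hA : IsBidirected A) (hconn : ConnectedInc A)
    (hz : z ᵥ* A.map Int.cast = 0) {i : Fin d} (hi : z i = 0) : z = 0 :=
  funext fun j => by
    obtain ⟨ε, -, hj⟩ := hA.exists_ker_apply_eq hconn hz i j
    simp [hj, hi]

lemma IsBidirected.ker_eq_zero_of_hasHalfedge (hA : IsBidirected A) (hconn : ConnectedInc A)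
    (hh : HasHalfedge A) (hz : z ᵥ* A.map Int.cast = 0) : z = 0 := by
  obtain ⟨e, i, s, hs, hc⟩ := hh
  have hsum := congrFun hz e
  rw [vecMul, dotProduct, Fintype.sum_eq_single i fun v hv => by
    simp [halfedgeCol_apply hc v, hv]] at hsum
  have hzi : z i * s = 0 := by simpa [halfedgeCol_apply hc i] using hsum
  refine hA.ker_eq_zero_of_apply_eq_zero hconn hz (i := i) ?_
  rcases hs with rfl | rfl <;> simpa using hzi

lemma IsBidirected.ker_eq_smul (hA : IsBidirected A) (hconn : ConnectedInc A)
    {η : Fin d → ℤ} (hη : η ᵥ* A = 0) {i₀ : Fin d} (hη₀ : η i₀ = 1)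
    (hz : z ᵥ* A.map Int.cast = 0) : z = z i₀ • fun j => (η j : R) := by
  have hη' : (fun j => (η j : R)) ᵥ* A.map Int.cast = 0 := by
    rw [Matrix.intCast_vecMul, hη]
    exact funext fun _ => Int.cast_zero
  rw [← sub_eq_zero]
  refine hA.ker_eq_zero_of_apply_eq_zero hconn (i := i₀) ?_ (by simp [hη₀])
  rw [sub_vecMul, smul_vecMul, hz, hη', smul_zero, sub_zero]

def IsWalk (A : Matrix (Fin d) E ℤ) (k : ℕ) (u : ℕ → Fin d) (f : ℕ → E) : Prop :=
  ∀ t < k, IsStep A (u t) (u (t + 1)) (f t)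

def walkSign (A : Matrix (Fin d) E ℤ) (k : ℕ) (u : ℕ → Fin d) (f : ℕ → E) : ℤ :=
  ∏ t ∈ range k, edgeSign A (u t) (u (t + 1)) (f t)

lemma isWalk_add_iff {a b : ℕ} :
    IsWalk A (a + b) u f ↔
      IsWalk A a u f ∧ IsWalk A b (fun t => u (a + t)) (fun t => f (a + t)) := by
  refine ⟨fun h => ⟨fun t ht => h t (by omega), fun t ht => h (a + t) (by omega)⟩,
    fun ⟨h₁, h₂⟩ t ht => ?_⟩
  rcases lt_or_ge t a with hta | hta
  · exact h₁ t hta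
  · have h := h₂ (t - a) (by omega)
    simp only at h
    rwa [show a + (t - a) = t by omega, show a + (t - a + 1) = t + 1 by omega] at h

lemma walkSign_add {a b : ℕ} :
    walkSign A (a + b) u f =
      walkSign A a u f * walkSign A b (fun t => u (a + t)) (fun t => f (a + t)) := by
  simp only [walkSign, prod_range_add, add_assoc]

lemma isWalk_congr (hu : ∀ t ≤ k, u t = u' t) (hf : ∀ t < k, f t = f' t) :
    IsWalk A k u f ↔ IsWalk A k u' f' :=
  forall₂_congr fun t ht => by rw [hu t ht.le, hu (t + 1) ht, hf t ht]

lemma walkSign_congr (hu : ∀ t ≤ k, u t = u' t) (hf : ∀ t < k, f t = f' t) :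
    walkSign A k u f = walkSign A k u' f' :=
  prod_congr rfl fun t ht => by
    rw [mem_range] at ht
    rw [hu t ht.le, hu (t + 1) ht, hf t ht]

lemma walkSign_one : walkSign A 1 u f = edgeSign A (u 0) (u 1) (f 0) := by
  simp [walkSign]

lemma IsStep.isWalk {p q : Fin d} {e : E} (h : IsStep A p q e) :
    IsWalk A 1 (fun t => if t = 0 then p else q) (fun _ => e) := by
  intro t ht
  obtain rfl : t = 0 := by omega
  simpa using h

lemma IsBidirected.isUnit_walkSign (hA : IsBidirected A) (hw : IsWalk A k u f) :
    IsUnit (walkSign A k u f) :=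
  IsUnit.prod_iff.mpr fun t ht => hA.isUnit_edgeSign (hw t (mem_range.mp ht))

lemma IsBidirected.ker_apply_of_isWalk (hA : IsBidirected A) (hz : z ᵥ* A.map Int.cast = 0)
    (hw : IsWalk A k u f) : z (u k) = walkSign A k u f * z (u 0) := by
  induction k with
  | zero => simp [walkSign]
  | succ k ih =>
    rw [hA.ker_apply_of_isStep hz (hw k k.lt_succ_self), ih fun t ht => hw t (by omega)]
    simp only [walkSign, prod_range_succ]
    push_cast
    ring

lemma IsWalk.append {k₁ k₂ : ℕ} {u₁ u₂ : ℕ → Fin d} {f₁ f₂ : ℕ → E}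
    (hw₁ : IsWalk A k₁ u₁ f₁) (hw₂ : IsWalk A k₂ u₂ f₂) (h : u₁ k₁ = u₂ 0) :
    ∃ u f, IsWalk A (k₁ + k₂) u f ∧ u 0 = u₁ 0 ∧ u (k₁ + k₂) = u₂ k₂ ∧
      walkSign A (k₁ + k₂) u f = walkSign A k₁ u₁ f₁ * walkSign A k₂ u₂ f₂ := by
  set u := fun t => if t ≤ k₁ then u₁ t else u₂ (t - k₁)
  set f := fun t => if t < k₁ then f₁ t else f₂ (t - k₁)
  have hu : ∀ t ≤ k₁, u t = u₁ t := fun t ht => if_pos ht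
  have hf : ∀ t < k₁, f t = f₁ t := fun t ht => if_pos ht
  have hu' : (fun t => u (k₁ + t)) = u₂ := funext fun t => by
    rcases Nat.eq_zero_or_pos t with rfl | ht
    · simp [u, h]
    · simp [u, show ¬ k₁ + t ≤ k₁ by omega]
  have hf' : (fun t => f (k₁ + t)) = f₂ := funext fun t => by simp [f]
  refine ⟨u, f, ?_, hu 0 (Nat.zero_le _), congrFun hu' k₂, ?_⟩
  · rw [isWalk_add_iff, hu', hf', isWalk_congr hu hf]
    exact ⟨hw₁, hw₂⟩
  · rw [walkSign_add, hu', hf', walkSign_congr hu hf]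

lemma IsWalk.reverse (hw : IsWalk A k u f) :
    IsWalk A k (fun t => u (k - t)) (fun t => f (k - 1 - t)) ∧
      walkSign A k (fun t => u (k - t)) (fun t => f (k - 1 - t)) = walkSign A k u f := by
  refine ⟨fun t ht => ?_, ?_⟩
  · have h := (hw (k - 1 - t) (by omega)).symm
    rw [show k - 1 - t + 1 = k - t by omega] at h
    show IsStep A (u (k - t)) (u (k - (t + 1))) (f (k - 1 - t))
    rwa [show k - (t + 1) = k - 1 - t by omega]
  · rw [walkSign, ← prod_range_reflect]
    refine prod_congr rfl fun t ht => ?_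
    rw [mem_range] at ht
    simp only [edgeSign, show k - (k - 1 - t) = t + 1 by omega,
      show k - (k - 1 - t + 1) = t by omega, show k - 1 - (k - 1 - t) = t by omega]
    ring

lemma ConnectedInc.exists_isWalk [Nonempty E] (hconn : ConnectedInc A) (i j : Fin d) :
    ∃ k u f, IsWalk A k u f ∧ u 0 = i ∧ u k = j := by
  induction hconn i j with
  | refl =>
    exact ⟨0, fun _ => i, fun _ => Classical.arbitrary E, fun t ht => absurd ht t.not_lt_zero,
      rfl, rfl⟩
  | tail _ hstep ih =>
    obtain ⟨k, u, f, hw, h0, hk⟩ := ih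
    obtain ⟨hne, e, hp, hq⟩ := hstep
    obtain ⟨v, g, hvg, hv0, hvk, -⟩ :=
      hw.append (IsStep.isWalk ⟨hne, hp, hq⟩) (by simpa using hk)
    exact ⟨k + 1, v, g, hvg, hv0.trans h0, by simpa using hvk⟩

lemma IsCircle.isWalk (hc : IsCircle A k u f) :
    IsWalk A k (fun t => u (t % k)) f ∧
      walkSign A k (fun t => u (t % k)) f = circleSign A k u f := by
  obtain ⟨hk, hu, -, hstep⟩ := hc
  refine ⟨fun t ht => ?_, prod_congr rfl fun t ht => ?_⟩
  · obtain ⟨h₁, h₂, -⟩ := hstep t ht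
    dsimp only
    rw [Nat.mod_eq_of_lt ht]
    refine ⟨fun h => ?_, h₁, h₂⟩
    have := hu t ((t + 1) % k) ht (Nat.mod_lt _ (by omega)) h
    rcases lt_or_ge (t + 1) k with h' | h'
    · rw [Nat.mod_eq_of_lt h'] at this
      omega
    · rw [show t + 1 = k by omega, Nat.mod_self] at this
      omega
  · dsimp only
    rw [Nat.mod_eq_of_lt (mem_range.mp ht), edgeSign]

lemma IsBidirected.eq_two_of_isWalk_of_edge_eq (hA : IsBidirected A) (hw : IsWalk A k u f)
    (hcl : u k = u 0) (hu : ∀ t t', t < k → t' < k → u t = u t' → t = t') {t t' : ℕ}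
    (htt' : t < t') (ht' : t' < k) (hf : f t = f t') : k = 2 ∧ t = 0 ∧ t' = 1 := by
  have hsupp := (hA.entries_of_isStep (hw t (by omega))).2.2
  have h₁ := hsupp (u t') (by rw [hf]; exact (hw t' ht').2.1)
  have h₂ := hsupp (u (t' + 1)) (by rw [hf]; exact (hw t' ht').2.2)
  have hne := (hw t' ht').1
  grind

lemma IsBidirected.walkSign_eq_one_of_injOn (hA : IsBidirected A)
    (hpos : ∀ k u f, IsCircle A k u f → circleSign A k u f = 1) (hw : IsWalk A k u f)
    (hcl : u k = u 0) (hu : ∀ t t', t < k → t' < k → u t = u t' → t = t') :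
    walkSign A k u f = 1 := by
  rcases lt_or_ge k 2 with hk | hk
  · interval_cases k
    · simp [walkSign]
    · exact absurd hcl.symm (hw 0 one_pos).1
  by_cases h2 : k = 2 ∧ f 0 = f 1
  · obtain ⟨rfl, hf⟩ := h2
    simp only [walkSign, prod_range_succ, prod_range_zero, one_mul, hcl, ← hf]
    rw [edgeSign_comm (u 0) (u 1)]
    exact Int.isUnit_mul_self (hA.isUnit_edgeSign (hw 0 two_pos))
  have hmod : ∀ t < k, u ((t + 1) % k) = u (t + 1) := fun t ht => by
    rcases lt_or_ge (t + 1) k with h' | h'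
    · rw [Nat.mod_eq_of_lt h']
    · rw [show t + 1 = k by omega, Nat.mod_self, hcl]
  have hc : IsCircle A k u f := by
    refine ⟨hk, hu, fun t t' ht ht' hf => ?_, fun t ht => ?_⟩
    · by_contra hne
      rcases lt_or_gt_of_ne hne with h | h
      · have := hA.eq_two_of_isWalk_of_edge_eq hw hcl hu h ht' hf
        grind
      · have := hA.eq_two_of_isWalk_of_edge_eq hw hcl hu h ht hf.symm
        grind
    · obtain ⟨-, h₁, h₂⟩ := hw t ht
      rw [hmod t ht]
      exact ⟨h₁, h₂, (hA.entries_of_isStep (hw t ht)).2.2⟩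
  rw [← hpos k u f hc]
  exact prod_congr rfl fun t ht => by rw [hmod t (mem_range.mp ht), edgeSign]

/-- A closed walk with a repeated vertex splits into two shorter closed walks; one without is a
circle, or a single edge traversed back and forth. -/
theorem IsBidirected.walkSign_eq_one_of_closed (hA : IsBidirected A)
    (hpos : ∀ k u f, IsCircle A k u f → circleSign A k u f = 1) (hw : IsWalk A k u f)
    (hcl : u k = u 0) : walkSign A k u f = 1 := by
  induction k using Nat.strong_induction_on generalizing u f with
  | _ k ih =>
  by_cases hrep : ∃ a b, a < b ∧ b ≤ k ∧ b - a < k ∧ u a = u b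
  · obtain ⟨a, b, hab, hbk, hlt, hu⟩ := hrep
    obtain ⟨c, rfl⟩ : ∃ c, k = b + c := ⟨k - b, by omega⟩
    obtain ⟨l, rfl⟩ : ∃ l, b = a + l := ⟨b - a, by omega⟩
    rw [isWalk_add_iff, isWalk_add_iff] at hw
    obtain ⟨⟨hw₁, hw₂⟩, hw₃⟩ := hw
    have hloop : walkSign A l (fun t => u (a + t)) (fun t => f (a + t)) = 1 :=
      ih l (by omega) hw₂ (by simpa using hu.symm)
    obtain ⟨v, g, hvg, hv0, hvk, hs⟩ := hw₁.append hw₃ (by simpa using hu)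
    have hrest := ih (a + c) (by omega) hvg (by rw [hvk, hv0]; simpa using hcl)
    rw [walkSign_add, walkSign_add, hloop, mul_one, ← hs, hrest]
  · push Not at hrep
    refine hA.walkSign_eq_one_of_injOn hpos hw hcl fun t t' ht ht' h => ?_
    by_contra hne
    rcases lt_or_gt_of_ne hne with h' | h'
    · exact hrep t t' h' ht'.le (by omega) h
    · exact hrep t' t h' ht.le (by omega) h.symm

theorem IsBidirected.walkSign_eq_of_isWalk (hA : IsBidirected A)
    (hpos : ∀ k u f, IsCircle A k u f → circleSign A k u f = 1) {k' : ℕ}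
    (hw : IsWalk A k u f) (hw' : IsWalk A k' u' f') (h₀ : u 0 = u' 0) (h₁ : u k = u' k') :
    walkSign A k u f = walkSign A k' u' f' := by
  obtain ⟨hr, hrs⟩ := hw'.reverse
  obtain ⟨v, g, hvg, hv0, hvk, hs⟩ := hw.append hr (by simpa using h₁)
  have hone := hA.walkSign_eq_one_of_closed hpos hvg (by rw [hvk, hv0]; simpa using h₀.symm)
  rw [hs, hrs] at hone
  calc walkSign A k u f
      = walkSign A k u f * (walkSign A k' u' f' * walkSign A k' u' f') := by
        rw [Int.isUnit_mul_self (hA.isUnit_walkSign hw'), mul_one]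
    _ = walkSign A k' u' f' := by rw [← mul_assoc, hone, one_mul]

theorem IsBidirected.exists_ker_eq_one (hA : IsBidirected A) (hconn : ConnectedInc A)
    (hnh : ¬ HasHalfedge A) (hpos : ∀ k u f, IsCircle A k u f → circleSign A k u f = 1)
    (i₀ : Fin d) : ∃ η : Fin d → ℤ, η ᵥ* A = 0 ∧ η i₀ = 1 := by
  rcases isEmpty_or_nonempty E with hE | hE
  · exact ⟨1, Subsingleton.elim _ _, rfl⟩
  choose k u f hw h0 hk using hconn.exists_isWalk i₀
  set η := fun j => walkSign A (k j) (u j) (f j)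
  refine ⟨η, funext fun e => ?_, hA.walkSign_eq_one_of_closed hpos (hw i₀) (by rw [hk, h0])⟩
  obtain ⟨p, q, h⟩ := hA.exists_isStep hnh e
  obtain ⟨v, g, hvg, hv0, hvk, hs⟩ := (hw p).append h.isWalk (by simp [hk])
  have hq : η q = η p * edgeSign A p q e := by
    simp only [η]
    rw [hA.walkSign_eq_of_isWalk hpos (hw q) hvg (by rw [h0, hv0, h0]) (by simp [hk, hvk]),
      hs, walkSign_one]
    simp
  have hsum := hA.vecMul_apply_of_isStep h η
  rw [Matrix.map_intCast_int] at hsum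
  rw [hsum, hq, Pi.zero_apply, edgeSign]
  push_cast
  linear_combination (-(η p * A p e)) * Int.isUnit_mul_self (hA.entries_of_isStep h).2.1

lemma IsBidirected.two_mul_ker_apply_eq_zero (hA : IsBidirected A) (hconn : ConnectedInc A)
    (hc : IsCircle A k u f) (hneg : circleSign A k u f = -1) (hz : z ᵥ* A.map Int.cast = 0)
    (j : Fin d) : 2 * z j = 0 := by
  obtain ⟨hw, hs⟩ := hc.isWalk
  have h := hA.ker_apply_of_isWalk hz hw
  simp only [Nat.mod_self, Nat.zero_mod, hs, hneg] at h
  obtain ⟨ε, -, hj⟩ := hA.exists_ker_apply_eq hconn hz (u 0) j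
  rw [hj]
  linear_combination (ε : R) * h

lemma IsBidirected.ker_apply_eq_of_negative_circle (hA : IsBidirected A)
    (hconn : ConnectedInc A) (hc : IsCircle A k u f) (hneg : circleSign A k u f = -1)
    (hz : z ᵥ* A.map Int.cast = 0) (i j : Fin d) : z j = z i := by
  obtain ⟨ε, hε, hj⟩ := hA.exists_ker_apply_eq hconn hz i j
  rcases Int.isUnit_iff.mp hε with rfl | rfl
  · simp [hj]
  · linear_combination hj - hA.two_mul_ker_apply_eq_zero hconn hc hneg hz i

variable [Fintype E]

theorem IsBidirected.nonempty_addEquiv_of_balanced (hA : IsBidirected A)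
    (hconn : ConnectedInc A) (hnh : ¬ HasHalfedge A)
    (hpos : ∀ k u f, IsCircle A k u f → circleSign A k u f = 1) (hd : 1 ≤ d) :
    Nonempty ((E → ℤ) ⧸ LinearMap.range A.vecMulLinear ≃+ (Fin (Fintype.card E + 1 - d) → ℤ)) := by
  obtain ⟨η, hη, hη₀⟩ := hA.exists_ker_eq_one hconn hnh hpos ⟨0, hd⟩
  have hker : LinearMap.ker A.vecMulLinear = ℤ ∙ η := by
    ext z
    rw [LinearMap.mem_ker, vecMulLinear_apply, mem_span_singleton]
    refine ⟨fun hz => ⟨z ⟨0, hd⟩, ?_⟩, fun ⟨a, ha⟩ => by rw [← ha, smul_vecMul, hη, smul_zero]⟩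
    exact (hA.ker_eq_smul hconn hη hη₀ (by rwa [Matrix.map_intCast_int])).symm
  have hη0 : η ≠ 0 := fun h => by simp [h] at hη₀
  have hrank := finrank_quotient_range_add A.vecMulLinear
  rw [Fintype.card_fin, hker, ← (LinearEquiv.toSpanNonzeroSingleton ℤ _ η hη0).finrank_eq,
    finrank_self] at hrank
  refine nonempty_addEquiv_fin_of_torsion_eq_bot ?_ (by omega)
  exact torsion_quotient_range_vecMulLinear_eq_bot A η hη fun n z hz =>
    ⟨z ⟨0, hd⟩, hA.ker_eq_smul hconn hη hη₀ hz⟩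

theorem IsBidirected.nonempty_addEquiv_of_hasHalfedge (hA : IsBidirected A)
    (hconn : ConnectedInc A) (hh : HasHalfedge A) :
    Nonempty ((E → ℤ) ⧸ LinearMap.range A.vecMulLinear ≃+ (Fin (Fintype.card E - d) → ℤ)) := by
  have hker : LinearMap.ker A.vecMulLinear = ⊥ := LinearMap.ker_eq_bot'.mpr fun z hz =>
    hA.ker_eq_zero_of_hasHalfedge hconn hh (by rwa [Matrix.map_intCast_int])
  have hrank := finrank_quotient_range_add A.vecMulLinear
  rw [Fintype.card_fin, hker, finrank_bot] at hrank
  refine nonempty_addEquiv_fin_of_torsion_eq_bot ?_ (by omega)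
  exact torsion_quotient_range_vecMulLinear_eq_bot A 0 (zero_vecMul A) fun n z hz =>
    ⟨0, by simp [hA.ker_eq_zero_of_hasHalfedge hconn hh hz]⟩

theorem IsBidirected.nonempty_addEquiv_of_negative_circle (hA : IsBidirected A)
    (hconn : ConnectedInc A) (hnh : ¬ HasHalfedge A) (hc : IsCircle A k u f)
    (hneg : circleSign A k u f = -1) :
    Nonempty ((E → ℤ) ⧸ LinearMap.range A.vecMulLinear ≃+
      (Fin (Fintype.card E - d) → ℤ) × ZMod 2) := by
  obtain ⟨x₀, hx₀⟩ := hA.exists_vecMul_one_eq_two_smul hnh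
  have hinj : ∀ y : Fin d → ℤ, y ᵥ* A = 0 → y = 0 := fun y hy => funext fun j => by
    have := hA.two_mul_ker_apply_eq_zero hconn hc hneg (by rwa [Matrix.map_intCast_int]) j
    simp only [Pi.zero_apply]
    omega
  have hx₀ne : Submodule.Quotient.mk x₀ ≠ (0 : (E → ℤ) ⧸ LinearMap.range A.vecMulLinear) := by
    rw [Ne, Submodule.Quotient.mk_eq_zero]
    rintro ⟨w, hw⟩
    have h := congrFun (hinj ((2 : ℤ) • w - 1) (by
      rw [sub_vecMul, smul_vecMul, ← vecMulLinear_apply, hw, hx₀, sub_self])) (u 0)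
    simp only [Pi.sub_apply, Pi.smul_apply, smul_eq_mul, Pi.one_apply, Pi.zero_apply] at h
    omega
  have hx₀₂ : Submodule.Quotient.mk x₀ + Submodule.Quotient.mk x₀ =
      (0 : (E → ℤ) ⧸ LinearMap.range A.vecMulLinear) := by
    rw [← Submodule.Quotient.mk_add, Submodule.Quotient.mk_eq_zero]
    exact ⟨1, by rw [vecMulLinear_apply, hx₀, two_smul]⟩
  have hrank := finrank_quotient_range_add A.vecMulLinear
  rw [Fintype.card_fin, LinearMap.ker_eq_bot'.mpr hinj, finrank_bot] at hrank
  refine nonempty_addEquiv_fin_prod_zmod_two hx₀ne hx₀₂ ?_ (by omega)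
  exact torsion_quotient_range_vecMulLinear_le A 1 x₀ 2 hx₀ fun n z hz =>
    ⟨z (u 0), by simpa using hA.two_mul_ker_apply_eq_zero hconn hc hneg hz (u 0),
      funext fun j => by simp [hA.ker_apply_eq_of_negative_circle hconn hc hneg hz (u 0) j]⟩

end BidirectedGraph

theorem divisor_class_group_of_signed_poset
    (d : ℕ) (hd : 1 ≤ d) (E : Type*) [Fintype E]
    (A : Matrix (Fin d) E ℤ)
    (hA : IsBidirected A) (hconn : ConnectedInc A) :
    ((¬ HasHalfedge A) ∧ (∀ k u f, IsCircle A k u f → circleSign A k u f = 1) →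
      Nonempty (((E → ℤ) ⧸ LinearMap.range (Matrix.mulVecLin Aᵀ)) ≃+
        (Fin (Fintype.card E + 1 - d) → ℤ))) ∧
    (HasHalfedge A →
      Nonempty (((E → ℤ) ⧸ LinearMap.range (Matrix.mulVecLin Aᵀ)) ≃+
        (Fin (Fintype.card E - d) → ℤ))) ∧
    ((¬ HasHalfedge A) ∧ (∃ k u f, IsCircle A k u f ∧ circleSign A k u f = -1) →
      Nonempty (((E → ℤ) ⧸ LinearMap.range (Matrix.mulVecLin Aᵀ)) ≃+
        ((Fin (Fintype.card E - d) → ℤ) × ZMod 2))) := by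
  rw [Matrix.mulVecLin_transpose]
  exact ⟨fun ⟨hnh, hpos⟩ => hA.nonempty_addEquiv_of_balanced hconn hnh hpos hd,
    hA.nonempty_addEquiv_of_hasHalfedge hconn,
    fun ⟨hnh, _, _, _, hc, hneg⟩ => hA.nonempty_addEquiv_of_negative_circle hconn hnh hc hneg⟩
end

section
/- Let Σ be a connected bidirected graph on {1,…,d} with incidence matrix A of rank r. Then for every integer i with 1 ≤ i < r, the greatest common divisor of the determinants of all i×i submatrices of A equals 1; equivalently, A has an i×i submatrix with determinant ±1. -/
open Matrix

lemma aux_crossing {α : Type*} {R : α → α → Prop} (S : α → Prop) :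
    ∀ {a b : α}, Relation.ReflTransGen R a b → S a → ¬ S b →
      ∃ u w, S u ∧ ¬ S w ∧ R u w := by
  intro a b h
  induction h with
  | refl => intro hSa hSb; exact absurd hSa hSb
  | @tail b' c' hab hbc ih =>
    intro hSa hSc
    by_cases hb : S b'
    · exact ⟨b', c', hb, hSc, hbc⟩
    · exact ih hSa hb

lemma aux_entry_unit {d : ℕ} {E : Type*} {A : Matrix (Fin d) E ℤ} (hA : IsBidirected A)
    {x : Fin d} {e : E} (h : A x e ≠ 0) : A x e = 1 ∨ A x e = -1 := by
  rcases hA e with ⟨i, s, hs, hc⟩ | ⟨i, j, s, s', hij, hs, hs', hc⟩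
  · have hx := congrFun hc x
    by_cases hxi : x = i
    · subst hxi
      rcases hs with rfl | rfl <;> simp [Pi.single_apply] at hx <;> simp [hx]
    · simp [Pi.single_apply, hxi] at hx
      exact absurd hx h
  · have hx := congrFun hc x
    by_cases hxi : x = i
    · subst hxi
      rcases hs with rfl | rfl <;> rcases hs' with rfl | rfl <;>
        simp [Pi.single_apply, hij] at hx <;> simp [hx]
    · by_cases hxj : x = j
      · subst hxj
        rcases hs with rfl | rfl <;> rcases hs' with rfl | rfl <;>
          simp [Pi.single_apply, Ne.symm hij] at hx <;> simp [hx]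
      · simp [Pi.single_apply, hxi, hxj] at hx
        exact absurd hx h

lemma aux_endpoints {d : ℕ} {E : Type*} {A : Matrix (Fin d) E ℤ} (hA : IsBidirected A)
    {u w : Fin d} {e : E} (huw : u ≠ w) (hu : A u e ≠ 0) (hw : A w e ≠ 0) :
    ∀ x, A x e ≠ 0 → x = u ∨ x = w := by
  rcases hA e with ⟨i, s, hs, hc⟩ | ⟨i, j, s, s', hij, hs, hs', hc⟩
  · have key : ∀ x : Fin d, A x e ≠ 0 → x = i := by
      intro x hx
      by_contra hcon
      have hx' := congrFun hc x
      simp [Pi.single_apply, hcon] at hx'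
      exact hx hx'
    exact absurd ((key u hu).trans (key w hw).symm) huw
  · have key : ∀ x : Fin d, A x e ≠ 0 → x = i ∨ x = j := by
      intro x hx
      by_contra hcon
      push_neg at hcon
      have hx' := congrFun hc x
      simp [Pi.single_apply, hcon.1, hcon.2] at hx'
      exact hx hx'
    intro x hx
    rcases key u hu with rfl | rfl <;> rcases key w hw with rfl | rfl <;>
      rcases key x hx with rfl | rfl <;> tauto

lemma aux_forest {d : ℕ} {E : Type*} {A : Matrix (Fin d) E ℤ}
    (hd : 1 ≤ d) (hA : IsBidirected A) (hconn : ConnectedInc A) :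
    ∀ n, n < d → ∃ v : ℕ → Fin d,
      (∀ a b, a ≤ n → b ≤ n → v a = v b → a = b) ∧
      (∀ t, t < n → ∃ c : E, A (v (t+1)) c ≠ 0 ∧
        ∀ w, A w c ≠ 0 → ∃ s, s ≤ t + 1 ∧ w = v s) := by
  intro n
  induction n with
  | zero =>
    intro _
    exact ⟨fun _ => ⟨0, hd⟩, fun a b ha hb _ => by omega, fun t ht => absurd ht (by omega)⟩
  | succ n ih =>
    intro hn
    obtain ⟨v, hinj, hedge⟩ := ih (by omega)
    have hex : ∃ x : Fin d, x ∉ Finset.image v (Finset.range (n+1)) := by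
      by_contra hcon
      push_neg at hcon
      have h1 : (Finset.univ : Finset (Fin d)).card ≤
          (Finset.image v (Finset.range (n+1))).card :=
        Finset.card_le_card (fun x _ => hcon x)
      have h2 : (Finset.image v (Finset.range (n+1))).card ≤ n + 1 :=
        Finset.card_image_le.trans (by simp)
      simp at h1
      omega
    obtain ⟨x, hx⟩ := hex
    obtain ⟨u, w, hSu, hSw, huw, e0, hu0, hw0⟩ :=
      aux_crossing (fun y => y ∈ Finset.image v (Finset.range (n+1)))
        (hconn (v 0) x) (Finset.mem_image.2 ⟨0, by simp⟩) hx
    obtain ⟨s0, hs0, rfl⟩ := Finset.mem_image.1 hSu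
    rw [Finset.mem_range] at hs0
    refine ⟨fun m => if m = n + 1 then w else v m, ?_, ?_⟩
    · intro a b ha hb hab
      by_cases ha' : a = n + 1 <;> by_cases hb' : b = n + 1
      · omega
      · simp [ha', hb'] at hab
        exact absurd (Finset.mem_image.2 ⟨b, Finset.mem_range.2 (by omega), hab.symm⟩) hSw
      · simp [ha', hb'] at hab
        exact absurd (Finset.mem_image.2 ⟨a, Finset.mem_range.2 (by omega), hab⟩) hSw
      · exact hinj a b (by omega) (by omega) (by simpa [ha', hb'] using hab)
    · intro t ht
      by_cases ht' : t < n
      · obtain ⟨c, hc1, hc2⟩ := hedge t ht'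
        refine ⟨c, by simp only [show t + 1 ≠ n + 1 by omega, if_false]; exact hc1, ?_⟩
        intro w' hw'
        obtain ⟨s, hs, rfl⟩ := hc2 w' hw'
        exact ⟨s, hs, by simp only [show s ≠ n + 1 by omega, if_false]⟩
      · have ht'' : t = n := by omega
        subst ht''
        refine ⟨e0, by simp [hw0], ?_⟩
        intro w' hw'
        rcases aux_endpoints hA huw hu0 hw0 w' hw' with rfl | rfl
        · exact ⟨s0, by omega, by simp only [show s0 ≠ t + 1 by omega, if_false]⟩
        · exact ⟨t + 1, le_refl _, by simp⟩

theorem lower_minor_gcds_are_one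
    (d : ℕ) (hd : 1 ≤ d) (E : Type*) [Fintype E] [DecidableEq E]
    (A : Matrix (Fin d) E ℤ)
    (hA : IsBidirected A) (hconn : ConnectedInc A)
    (r : ℕ) (hr : r = (A.map (Int.cast : ℤ → ℚ)).rank)
    (i : ℕ) (h1 : 1 ≤ i) (h2 : i < r) :
    (Finset.univ.gcd fun p : (Fin i → Fin d) × (Fin i → E) =>
      ((A.submatrix p.1 p.2).det).natAbs) = 1 ∧
    ∃ (f : Fin i → Fin d) (g : Fin i → E),
      (A.submatrix f g).det = 1 ∨ (A.submatrix f g).det = -1 := by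
  have hrle : r ≤ d := by
    rw [hr]
    simpa using Matrix.rank_le_card_height (A.map (Int.cast : ℤ → ℚ))
  have hid : i < d := lt_of_lt_of_le h2 hrle
  obtain ⟨v, hinj, hedge⟩ := aux_forest hd hA hconn i hid
  choose c hc1 hc2 using hedge
  set f : Fin i → Fin d := fun s => v (s.1 + 1) with hf
  set g : Fin i → E := fun t => c t.1 t.2 with hg
  have htri : (A.submatrix f g).BlockTriangular id := by
    intro a b hab
    by_contra hne
    obtain ⟨s, hs, heq⟩ := hc2 b.1 b.2 (f a) hne
    have := hinj (a.1 + 1) s (by omega) (by have := b.2; omega) heq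
    have hba : (b : ℕ) < a := hab
    omega
  have hdiag : ∀ t : Fin i, IsUnit ((A.submatrix f g) t t) := by
    intro t
    rcases aux_entry_unit hA (hc1 t.1 t.2) with h | h <;>
      simp [Matrix.submatrix_apply, hf, hg, h]
  have hdet : IsUnit (A.submatrix f g).det := by
    rw [Matrix.det_of_upperTriangular htri]
    exact Finset.prod_induction _ IsUnit (fun a b => IsUnit.mul) isUnit_one
      (fun t _ => hdiag t)
  have hpm := Int.isUnit_iff.mp hdet
  refine ⟨?_, f, g, hpm⟩
  have hdvd : (Finset.univ.gcd fun p : (Fin i → Fin d) × (Fin i → E) =>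
      ((A.submatrix p.1 p.2).det).natAbs) ∣ ((A.submatrix f g).det).natAbs :=
    Finset.gcd_dvd (Finset.mem_univ (f, g))
  have h1' : ((A.submatrix f g).det).natAbs = 1 := by
    rcases hpm with h | h <;> rw [h] <;> rfl
  rw [h1'] at hdvd
  exact Nat.dvd_one.mp hdvd
end
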